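/- arXiv:2412.16850 — 8 statements merged into one kernel-verified Lean document; each statement's English description precedes it below -/
import Mathlib

section
/- Let φ : [0,∞) → ℝ be a nonnegative, bounded, measurable function and let μ : [0,∞) → ℝ be a bounded measurable function. Then there exists a unique locally bounded measurable function λ̄ : [0,∞) → ℝ satisfying the Volterra integral equation λ̄(t) = μ(t) + ∫₀ᵗ φ(t−s) λ̄(s) ds for all t ≥ 0. -/
/-!
Write `K f (t) = ∫₀ᵗ φ(t - s) f(s) ds`. If `|φ| ≤ C` and `|f(s)| ≤ M (C s)ⁿ / n!` on `[0, t]`,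
then `|K f (t)| ≤ M (C t)ⁿ⁺¹ / (n + 1)!`. Iterating from `|μ| ≤ M`, the Neumann series
`∑ Kⁿ μ` is dominated by `M e^{C t}`, so it converges and may be integrated termwise; it then
solves `λ = μ + K λ`. The difference `d` of two locally bounded solutions satisfies `d = K d`,
so the same estimate gives `|d(t)| ≤ D (C t)ⁿ / n!` for every `n`, whence `d = 0`.
-/

open MeasureTheory Filter

/-- A function `f : ℝ → ℝ` is locally bounded on `[0, ∞)`:
bounded on every compact interval `[0, T]`. -/
def LocallyBddOn (f : ℝ → ℝ) : Prop :=
  ∀ T : ℝ, ∃ C : ℝ, ∀ t ∈ Set.Icc (0 : ℝ) T, |f t| ≤ C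

/-- `lam` solves the Volterra integral equation
`λ̄(t) = μ(t) + ∫₀ᵗ φ(t−s) λ̄(s) ds` for all `t ≥ 0`. -/
def VolterraSol (φ μ lam : ℝ → ℝ) : Prop :=
  ∀ t : ℝ, 0 ≤ t → lam t = μ t + ∫ s in (0 : ℝ)..t, φ (t - s) * lam s

open Set

lemma hasSum_mul_pow_div_factorial (M x : ℝ) :
    HasSum (fun n => M * x ^ n / n.factorial) (M * Real.exp x) := by
  simpa only [mul_div_assoc, Real.exp_eq_exp_ℝ] using
    (NormedSpace.expSeries_div_hasSum_exp x).mul_left M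

-- Integrating over `Ioc 0 t` rather than `0..t` makes the operator vanish for `t < 0`.
noncomputable def volterraOp (φ f : ℝ → ℝ) (t : ℝ) : ℝ :=
  ∫ s in Ioc 0 t, φ (t - s) * f s

section

variable {φ f g : ℝ → ℝ} {C : ℝ}

lemma volterraOp_of_neg {t : ℝ} (ht : t < 0) : volterraOp φ f t = 0 := by
  simp [volterraOp, Ioc_eq_empty_of_le (le_of_lt ht)]

lemma measurable_volterraOp (hφ : Measurable φ) (hf : Measurable f) :
    Measurable (volterraOp φ f) := by
  let F : ℝ × ℝ → ℝ := {p | p.2 ∈ Ioc 0 p.1}.indicator fun p => φ (p.1 - p.2) * f p.2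
  have hF : StronglyMeasurable F := by
    refine (Measurable.indicator (by fun_prop) ?_).stronglyMeasurable
    exact (measurableSet_lt measurable_const measurable_snd).inter
      (measurableSet_le measurable_snd measurable_fst)
  convert (hF.integral_prod_right' (ν := volume)).measurable using 2 with t
  rw [volterraOp, ← integral_indicator measurableSet_Ioc]
  rfl

lemma integrableOn_volterra_integrand (hφm : Measurable φ) (hφ : ∀ u, 0 ≤ u → |φ u| ≤ C)
    (hf : Measurable f) {t B : ℝ} (hB : ∀ s ∈ Icc 0 t, |f s| ≤ B) :
    IntegrableOn (fun s => φ (t - s) * f s) (Ioc 0 t) := by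
  refine Measure.integrableOn_of_bounded (M := C * B) measure_Ioc_lt_top.ne
    (by fun_prop) ((ae_restrict_iff' measurableSet_Ioc).2 (ae_of_all _ fun s hs => ?_))
  rw [Real.norm_eq_abs, abs_mul]
  exact mul_le_mul (hφ _ (sub_nonneg.2 hs.2)) (hB s (Ioc_subset_Icc_self hs)) (abs_nonneg _)
    ((abs_nonneg _).trans (hφ 0 le_rfl))

lemma volterraOp_sub {t : ℝ} (hf : IntegrableOn (fun s => φ (t - s) * f s) (Ioc 0 t))
    (hg : IntegrableOn (fun s => φ (t - s) * g s) (Ioc 0 t)) :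
    volterraOp φ (f - g) t = volterraOp φ f t - volterraOp φ g t := by
  simp only [volterraOp, Pi.sub_apply, mul_sub, integral_sub hf hg]

lemma abs_volterraOp_le (hφ : ∀ u, 0 ≤ u → |φ u| ≤ C) {M t : ℝ} {n : ℕ} (ht : 0 ≤ t)
    (hf : ∀ s ∈ Icc 0 t, |f s| ≤ M * (C * s) ^ n / n.factorial) :
    |volterraOp φ f t| ≤ M * (C * t) ^ (n + 1) / (n + 1).factorial := by
  have hC : 0 ≤ C := (abs_nonneg _).trans (hφ 0 le_rfl)
  have hbound : ∀ᵐ s ∂volume.restrict (Ioc 0 t),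
      ‖φ (t - s) * f s‖ ≤ C * (M * (C * s) ^ n / n.factorial) := by
    refine (ae_restrict_iff' measurableSet_Ioc).2 (ae_of_all _ fun s hs => ?_)
    rw [Real.norm_eq_abs, abs_mul]
    exact mul_le_mul (hφ _ (sub_nonneg.2 hs.2)) (hf s (Ioc_subset_Icc_self hs))
      (abs_nonneg _) hC
  have hpoly : ∀ s : ℝ, C * (M * (C * s) ^ n / n.factorial)
      = C ^ (n + 1) * M / n.factorial * s ^ n := fun s => by ring
  calc |volterraOp φ f t| ≤ ∫ s in Ioc 0 t, C * (M * (C * s) ^ n / n.factorial) :=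
        norm_integral_le_of_norm_le (Continuous.integrableOn_Ioc (by fun_prop)) hbound
    _ = ∫ s in (0 : ℝ)..t, C * (M * (C * s) ^ n / n.factorial) :=
        (intervalIntegral.integral_of_le ht).symm
    _ = M * (C * t) ^ (n + 1) / (n + 1).factorial := by
        simp only [hpoly, intervalIntegral.integral_const_mul, integral_pow, Nat.factorial_succ]
        push_cast
        field_simp
        ring

lemma abs_le_of_eq_volterraOp_succ (hφ : ∀ u, 0 ≤ u → |φ u| ≤ C) {g : ℕ → ℝ → ℝ} {M T : ℝ}
    (h0 : ∀ t ∈ Icc 0 T, |g 0 t| ≤ M)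
    (hsucc : ∀ n, ∀ t ∈ Icc 0 T, g (n + 1) t = volterraOp φ (g n) t) (n : ℕ) :
    ∀ t ∈ Icc 0 T, |g n t| ≤ M * (C * t) ^ n / n.factorial := by
  induction n with
  | zero => simpa using h0
  | succ n ih =>
    intro t ht
    rw [hsucc n t ht]
    exact abs_volterraOp_le hφ ht.1 fun s hs => ih s ⟨hs.1, hs.2.trans ht.2⟩

lemma hasSum_volterraOp (hφm : Measurable φ) (hφ : ∀ u, 0 ≤ u → |φ u| ≤ C)
    {u : ℕ → ℝ → ℝ} {b : ℕ → ℝ} {t : ℝ} (hu : ∀ n, Measurable (u n))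
    (hub : ∀ n, ∀ s ∈ Icc 0 t, |u n s| ≤ b n) (hb : Summable b)
    (hsum : ∀ s ∈ Icc 0 t, HasSum (fun n => u n s) (f s)) :
    HasSum (fun n => volterraOp φ (u n) t) (volterraOp φ f t) := by
  have hC : 0 ≤ C := (abs_nonneg _).trans (hφ 0 le_rfl)
  refine hasSum_integral_of_dominated_convergence (fun n _ => C * b n)
    (fun n => by fun_prop) (fun n => ?_) (ae_of_all _ fun _ => hb.mul_left C)
    (integrable_const _) ?_
  all_goals refine (ae_restrict_iff' measurableSet_Ioc).2 (ae_of_all _ fun s hs => ?_)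
  · rw [Real.norm_eq_abs, abs_mul]
    exact mul_le_mul (hφ _ (sub_nonneg.2 hs.2)) (hub n s (Ioc_subset_Icc_self hs))
      (abs_nonneg _) hC
  · exact (hsum s (Ioc_subset_Icc_self hs)).mul_left _

end

lemma volterraSol_iff {φ μ lam : ℝ → ℝ} :
    VolterraSol φ μ lam ↔ ∀ t, 0 ≤ t → lam t = μ t + volterraOp φ lam t :=
  forall₂_congr fun t ht => by rw [volterraOp, intervalIntegral.integral_of_le ht]

noncomputable def volterraNeumannSeries (φ μ : ℝ → ℝ) (t : ℝ) : ℝ :=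
  ∑' n, (volterraOp φ)^[n] μ t

section NeumannSeries

variable {φ μ : ℝ → ℝ} {C M : ℝ}

lemma measurable_iterate_volterraOp (hφm : Measurable φ) (hμm : Measurable μ) (n : ℕ) :
    Measurable ((volterraOp φ)^[n] μ) := by
  induction n with
  | zero => exact hμm
  | succ n ih => rw [Function.iterate_succ_apply']; exact measurable_volterraOp hφm ih

lemma abs_iterate_volterraOp_le
    (hφ : ∀ u, 0 ≤ u → |φ u| ≤ C) (hμ : ∀ t, 0 ≤ t → |μ t| ≤ M) (n : ℕ) {t : ℝ} (ht : 0 ≤ t) :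
    |(volterraOp φ)^[n] μ t| ≤ M * (C * t) ^ n / n.factorial :=
  abs_le_of_eq_volterraOp_succ hφ (g := fun n => (volterraOp φ)^[n] μ)
    (fun s hs => hμ s hs.1) (fun n _ _ => by rw [Function.iterate_succ_apply']) n t ⟨ht, le_rfl⟩

lemma summable_iterate_volterraOp
    (hφ : ∀ u, 0 ≤ u → |φ u| ≤ C) (hμ : ∀ t, 0 ≤ t → |μ t| ≤ M) (t : ℝ) :
    Summable fun n => (volterraOp φ)^[n] μ t := by
  rcases lt_or_ge t 0 with ht | ht
  · refine summable_of_ne_finset_zero (s := {0}) fun n hn => ?_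
    obtain ⟨k, rfl⟩ := Nat.exists_eq_succ_of_ne_zero (by simpa using hn)
    rw [Function.iterate_succ_apply', volterraOp_of_neg ht]
  · exact .of_norm_bounded (hasSum_mul_pow_div_factorial M (C * t)).summable
      fun n => abs_iterate_volterraOp_le hφ hμ n ht

lemma measurable_volterraNeumannSeries (hφm : Measurable φ) (hμm : Measurable μ)
    (hφ : ∀ u, 0 ≤ u → |φ u| ≤ C) (hμ : ∀ t, 0 ≤ t → |μ t| ≤ M) :
    Measurable (volterraNeumannSeries φ μ) :=
  measurable_of_tendsto_metrizable
    (fun N => Finset.measurable_sum (Finset.range N)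
      fun n _ => measurable_iterate_volterraOp hφm hμm n)
    (tendsto_pi_nhds.2 fun t => (summable_iterate_volterraOp hφ hμ t).hasSum.tendsto_sum_nat)

lemma abs_volterraNeumannSeries_le
    (hφ : ∀ u, 0 ≤ u → |φ u| ≤ C) (hμ : ∀ t, 0 ≤ t → |μ t| ≤ M) {t : ℝ} (ht : 0 ≤ t) :
    |volterraNeumannSeries φ μ t| ≤ M * Real.exp (C * t) := by
  rw [← Real.norm_eq_abs]
  exact tsum_of_norm_bounded (hasSum_mul_pow_div_factorial M (C * t))
    fun n => abs_iterate_volterraOp_le hφ hμ n ht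

lemma locallyBddOn_volterraNeumannSeries
    (hφ : ∀ u, 0 ≤ u → |φ u| ≤ C) (hμ : ∀ t, 0 ≤ t → |μ t| ≤ M) :
    LocallyBddOn (volterraNeumannSeries φ μ) := by
  have hC : 0 ≤ C := (abs_nonneg _).trans (hφ 0 le_rfl)
  have hM : 0 ≤ M := (abs_nonneg _).trans (hμ 0 le_rfl)
  refine fun T => ⟨M * Real.exp (C * T), fun t ht => ?_⟩
  refine (abs_volterraNeumannSeries_le hφ hμ ht.1).trans ?_
  gcongr
  exact ht.2

lemma volterraSol_volterraNeumannSeries (hφm : Measurable φ) (hμm : Measurable μ)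
    (hφ : ∀ u, 0 ≤ u → |φ u| ≤ C) (hμ : ∀ t, 0 ≤ t → |μ t| ≤ M) :
    VolterraSol φ μ (volterraNeumannSeries φ μ) := by
  have hC : 0 ≤ C := (abs_nonneg _).trans (hφ 0 le_rfl)
  have hM : 0 ≤ M := (abs_nonneg _).trans (hμ 0 le_rfl)
  refine volterraSol_iff.2 fun t ht => ?_
  have hsum := hasSum_volterraOp hφm hφ (measurable_iterate_volterraOp hφm hμm)
    (fun n s hs => (abs_iterate_volterraOp_le hφ hμ n hs.1).trans
      (by gcongr; exacts [mul_nonneg hC hs.1, hs.2]))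
    (hasSum_mul_pow_div_factorial M (C * t)).summable
    (fun s _ => (summable_iterate_volterraOp hφ hμ s).hasSum)
  rw [volterraNeumannSeries, (summable_iterate_volterraOp hφ hμ t).tsum_eq_zero_add]
  simp only [Function.iterate_zero_apply, Function.iterate_succ_apply']
  rw [hsum.tsum_eq]
  rfl

end NeumannSeries

lemma VolterraSol.eq_of_locallyBddOn {φ μ lam lam' : ℝ → ℝ} {C : ℝ} (hφm : Measurable φ)
    (hφ : ∀ u, 0 ≤ u → |φ u| ≤ C) (hm : Measurable lam) (hb : LocallyBddOn lam)
    (hs : VolterraSol φ μ lam) (hm' : Measurable lam') (hb' : LocallyBddOn lam')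
    (hs' : VolterraSol φ μ lam') {t : ℝ} (ht : 0 ≤ t) : lam t = lam' t := by
  obtain ⟨B, hB⟩ := hb t
  obtain ⟨B', hB'⟩ := hb' t
  rw [volterraSol_iff] at hs hs'
  have hd : ∀ s ∈ Icc 0 t, |(lam - lam') s| ≤ B + B' := fun s hs =>
    (abs_sub _ _).trans (add_le_add (hB s hs) (hB' s hs))
  have hfix : ∀ s ∈ Icc 0 t, (lam - lam') s = volterraOp φ (lam - lam') s := by
    intro s hst
    have hsub : Icc 0 s ⊆ Icc 0 t := Icc_subset_Icc_right hst.2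
    rw [volterraOp_sub (integrableOn_volterra_integrand hφm hφ hm fun r hr => hB r (hsub hr))
      (integrableOn_volterra_integrand hφm hφ hm' fun r hr => hB' r (hsub hr)),
      Pi.sub_apply, hs s hst.1, hs' s hst.1]
    ring
  have hbound : ∀ n : ℕ, |(lam - lam') t| ≤ (B + B') * (C * t) ^ n / n.factorial := fun n =>
    abs_le_of_eq_volterraOp_succ hφ (g := fun _ => lam - lam') hd (fun _ => hfix) n t
      ⟨ht, le_rfl⟩
  have hlim := (hasSum_mul_pow_div_factorial (B + B') (C * t)).summable.tendsto_atTop_zero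
  exact sub_eq_zero.1 (abs_nonpos_iff.1 (ge_of_tendsto' hlim hbound))

/-- Existence and uniqueness of a locally bounded measurable solution to the
Volterra integral equation, for `φ` nonnegative, bounded and measurable, and
`μ` bounded and measurable. -/
theorem volterra_exists_unique
    (φ μ : ℝ → ℝ)
    (hφ_meas : Measurable φ)
    (hφ_nonneg : ∀ t : ℝ, 0 ≤ t → 0 ≤ φ t)
    (hφ_bdd : ∃ C : ℝ, ∀ t : ℝ, 0 ≤ t → φ t ≤ C)
    (hμ_meas : Measurable μ)
    (hμ_bdd : ∃ C : ℝ, ∀ t : ℝ, 0 ≤ t → |μ t| ≤ C) :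
    ∃ lam : ℝ → ℝ,
      (Measurable lam ∧ LocallyBddOn lam ∧ VolterraSol φ μ lam) ∧
      ∀ lam' : ℝ → ℝ, Measurable lam' → LocallyBddOn lam' → VolterraSol φ μ lam' →
        ∀ t : ℝ, 0 ≤ t → lam' t = lam t := by
  obtain ⟨C, hC⟩ := hφ_bdd
  obtain ⟨M, hμ⟩ := hμ_bdd
  have hφ : ∀ u, 0 ≤ u → |φ u| ≤ C := fun u hu =>
    (abs_of_nonneg (hφ_nonneg u hu)).trans_le (hC u hu)
  have hm := measurable_volterraNeumannSeries hφ_meas hμ_meas hφ hμ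
  have hb := locallyBddOn_volterraNeumannSeries hφ hμ
  have hs := volterraSol_volterraNeumannSeries hφ_meas hμ_meas hφ hμ
  exact ⟨volterraNeumannSeries φ μ, ⟨hm, hb, hs⟩, fun lam' hm' hb' hs' t ht =>
    hs'.eq_of_locallyBddOn hφ_meas hφ hm' hb' hm hb hs ht⟩
end

section
/- Let φ : [0,∞) → ℝ be a nonnegative, bounded, measurable function with ∫₀^∞ φ(t) dt < 1 (the stability condition), and let μ : [0,∞) → ℝ be a bounded measurable function with μ(t) > 0 for all t ≥ 0. Then the unique locally bounded measurable solution λ̄ of the Volterra integral equation λ̄(t) = μ(t) + ∫₀ᵗ φ(t−s) λ̄(s) ds is bounded and satisfies sup_{t≥0} λ̄(t) ≤ ‖μ‖∞ / (1 − ‖φ‖₁). -/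
open MeasureTheory Filter

/-- Under the stability condition `‖φ‖₁ = ∫₀^∞ φ < 1`, any locally bounded measurable
solution of the Volterra equation is bounded, with
`sup_{t ≥ 0} λ̄(t) ≤ ‖μ‖_∞ / (1 − ‖φ‖₁)`. -/
theorem volterra_solution_uniform_bound
    (φ μ lam : ℝ → ℝ)
    (hφ_meas : Measurable φ)
    (hφ_nonneg : ∀ t : ℝ, 0 ≤ t → 0 ≤ φ t)
    (hφ_bdd : ∃ C : ℝ, ∀ t : ℝ, 0 ≤ t → φ t ≤ C)
    (hφ_int : IntegrableOn φ (Set.Ioi 0))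
    (hφ_stab : ∫ t in Set.Ioi (0 : ℝ), φ t < 1)
    (hμ_meas : Measurable μ)
    (hμ_pos : ∀ t : ℝ, 0 ≤ t → 0 < μ t)
    (hμ_bdd : ∃ C : ℝ, ∀ t : ℝ, 0 ≤ t → |μ t| ≤ C)
    (hlam_meas : Measurable lam)
    (hlam_locbdd : LocallyBddOn lam)
    (hlam_sol : VolterraSol φ μ lam) :
    ∀ t : ℝ, 0 ≤ t →
      lam t ≤ (⨆ s : Set.Ici (0 : ℝ), |μ (s : ℝ)|) / (1 - ∫ t in Set.Ioi (0 : ℝ), φ t) := by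
  obtain ⟨Cμ, hCμ⟩ := hμ_bdd
  set ρ := ∫ t in Set.Ioi (0:ℝ), φ t with hρdef
  set M := (⨆ s : Set.Ici (0 : ℝ), |μ (s : ℝ)|) with hMdef
  have hρ0 : 0 ≤ ρ :=
    setIntegral_nonneg measurableSet_Ioi (fun x hx => hφ_nonneg x (le_of_lt hx))
  have hρ1 : ρ < 1 := hφ_stab
  have hMbdd : BddAbove (Set.range fun s : Set.Ici (0:ℝ) => |μ (s:ℝ)|) :=
    ⟨Cμ, by rintro _ ⟨s, rfl⟩; exact hCμ s s.2⟩
  have hμ_le_M : ∀ t : ℝ, 0 ≤ t → μ t ≤ M := fun t ht =>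
    (le_abs_self _).trans (le_ciSup hMbdd ⟨t, ht⟩)
  have hM0 : 0 ≤ M := (abs_nonneg (μ 0)).trans (le_ciSup hMbdd ⟨0, Set.self_mem_Ici⟩)
  intro T hT
  obtain ⟨C, hC⟩ := hlam_locbdd T
  set K := sSup (lam '' Set.Icc 0 T) with hKdef
  have hne : (lam '' Set.Icc 0 T).Nonempty :=
    ⟨lam 0, Set.mem_image_of_mem _ ⟨le_refl 0, hT⟩⟩
  have hbdd : BddAbove (lam '' Set.Icc 0 T) :=
    ⟨C, by rintro _ ⟨s, hs, rfl⟩; exact (le_abs_self _).trans (hC s hs)⟩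
  have hlamK : ∀ t ∈ Set.Icc (0:ℝ) T, lam t ≤ K := fun t ht =>
    le_csSup hbdd (Set.mem_image_of_mem _ ht)
  set Kp := max K 0 with hKpdef
  have hKp0 : 0 ≤ Kp := le_max_right _ _
  have key : ∀ t ∈ Set.Icc (0:ℝ) T, lam t ≤ M + ρ * Kp := by
    rintro t ⟨ht0, htT⟩
    rw [hlam_sol t ht0]
    have hint1 : IntervalIntegrable (fun s => φ (t - s)) volume 0 t := by
      have h0 : IntervalIntegrable φ volume 0 t :=
        (intervalIntegrable_iff_integrableOn_Ioc_of_le ht0).mpr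
          (hφ_int.mono_set Set.Ioc_subset_Ioi_self)
      have := h0.comp_sub_left t
      exact (by simpa using this : IntervalIntegrable (fun s => φ (t - s)) volume t 0).symm
    have hmul : IntervalIntegrable (fun s => φ (t - s) * lam s) volume 0 t := by
      have heq : (fun s => φ (t - s) * lam s) = fun s => lam s * φ (t - s) := by
        funext s; ring
      rw [heq, intervalIntegrable_iff_integrableOn_Ioc_of_le ht0]
      have hφi : IntegrableOn (fun s => φ (t - s)) (Set.Ioc 0 t) volume :=
        (intervalIntegrable_iff_integrableOn_Ioc_of_le ht0).mp hint1
      apply hφi.bdd_mul (c := C)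
      · exact hlam_meas.aestronglyMeasurable.restrict
      · refine ae_restrict_of_forall_mem measurableSet_Ioc ?_
        intro x hx
        exact hC x ⟨hx.1.le, hx.2.trans htT⟩
    have hconst : IntervalIntegrable (fun s => φ (t - s) * Kp) volume 0 t :=
      hint1.mul_const Kp
    have hmono : (∫ s in (0:ℝ)..t, φ (t - s) * lam s) ≤
        ∫ s in (0:ℝ)..t, φ (t - s) * Kp := by
      apply intervalIntegral.integral_mono_on ht0 hmul hconst
      intro s hs
      have h1 : 0 ≤ φ (t - s) := hφ_nonneg _ (by linarith [hs.1, hs.2])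
      have h2 : lam s ≤ Kp :=
        (hlamK s ⟨hs.1, hs.2.trans htT⟩).trans (le_max_left _ _)
      exact mul_le_mul_of_nonneg_left h2 h1
    have hsub : (∫ s in (0:ℝ)..t, φ (t - s) * Kp) = (∫ u in (0:ℝ)..t, φ u) * Kp := by
      rw [intervalIntegral.integral_mul_const]
      congr 1
      have := intervalIntegral.integral_comp_sub_left (a := (0:ℝ)) (b := t) φ t
      simpa using this
    have hintle : (∫ u in (0:ℝ)..t, φ u) ≤ ρ := by
      rw [intervalIntegral.integral_of_le ht0, hρdef]
      apply setIntegral_mono_set hφ_int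
      · refine ae_restrict_of_forall_mem measurableSet_Ioi ?_
        intro x hx; exact hφ_nonneg x hx.le
      · exact Filter.Eventually.of_forall Set.Ioc_subset_Ioi_self
    have : (∫ s in (0:ℝ)..t, φ (t - s) * lam s) ≤ ρ * Kp := by
      rw [hsub] at hmono
      calc (∫ s in (0:ℝ)..t, φ (t - s) * lam s) ≤ (∫ u in (0:ℝ)..t, φ u) * Kp := hmono
        _ ≤ ρ * Kp := mul_le_mul_of_nonneg_right hintle hKp0
    linarith [hμ_le_M t ht0]
  have hKle : K ≤ M + ρ * Kp := by
    apply csSup_le hne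
    rintro _ ⟨s, hs, rfl⟩
    exact key s hs
  have hKple : Kp ≤ M + ρ * Kp := by
    apply max_le hKle
    positivity
  have hfin : Kp ≤ M / (1 - ρ) := by
    rw [le_div_iff₀ (by linarith : (0:ℝ) < 1 - ρ)]
    nlinarith
  exact (hlamK T ⟨hT, le_refl T⟩).trans ((le_max_left K 0).trans hfin)
end

section
/- Let φ : [0,∞) → ℝ be a nonnegative, bounded, measurable function, and let μ : [0,∞) → ℝ be a bounded measurable function with μ(t) > 0 for all t ≥ 0 and lim_{t→∞} μ(t) = μ∞ > 0. Suppose the unique locally bounded measurable solution λ̄ of the Volterra integral equation λ̄(t) = μ(t) + ∫₀ᵗ φ(t−s) λ̄(s) ds converges to a finite limit L as t → ∞. Then ∫₀^∞ φ(t) dt < 1 and L = μ∞ / (1 − ‖φ‖₁). -/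
open MeasureTheory Filter Topology

/-- If `μ(t) → μ∞ > 0` and the locally bounded measurable solution `λ̄` of the
Volterra equation converges to a finite limit `L` as `t → ∞`, then the stability
condition `‖φ‖₁ < 1` must hold and `L = μ∞ / (1 − ‖φ‖₁)`. -/
theorem volterra_limit_forces_stability
    (φ μ lam : ℝ → ℝ) (μinf L : ℝ)
    (hφ_meas : Measurable φ)
    (hφ_nonneg : ∀ t : ℝ, 0 ≤ t → 0 ≤ φ t)
    (hφ_bdd : ∃ C : ℝ, ∀ t : ℝ, 0 ≤ t → φ t ≤ C)
    (hφ_int : IntegrableOn φ (Set.Ioi 0))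
    (hμ_meas : Measurable μ)
    (hμ_pos : ∀ t : ℝ, 0 ≤ t → 0 < μ t)
    (hμ_bdd : ∃ C : ℝ, ∀ t : ℝ, 0 ≤ t → |μ t| ≤ C)
    (hμinf_pos : 0 < μinf)
    (hμ_lim : Tendsto μ atTop (nhds μinf))
    (hlam_meas : Measurable lam)
    (hlam_locbdd : LocallyBddOn lam)
    (hlam_sol : VolterraSol φ μ lam)
    (hlam_lim : Tendsto lam atTop (nhds L)) :
    (∫ t in Set.Ioi (0 : ℝ), φ t) < 1 ∧
      L = μinf / (1 - ∫ t in Set.Ioi (0 : ℝ), φ t) := by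
  obtain ⟨Cφ, hCφ⟩ := hφ_bdd
  have hCφ0 : 0 ≤ Cφ := le_trans (hφ_nonneg 0 le_rfl) (hCφ 0 le_rfl)
  -- integrability of the kernel
  have hker : ∀ t : ℝ, 0 ≤ t →
      IntervalIntegrable (fun s => φ (t - s) * lam s) volume 0 t := by
    intro t ht
    obtain ⟨C, hC⟩ := hlam_locbdd t
    rw [intervalIntegrable_iff_integrableOn_Ioc_of_le ht]
    refine Measure.integrableOn_of_bounded (M := Cφ * C) (by simp) ?_ ?_
    · exact ((hφ_meas.comp (measurable_const.sub measurable_id)).mul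
        hlam_meas).aestronglyMeasurable
    · filter_upwards [ae_restrict_mem measurableSet_Ioc] with s hs
      have h1 : 0 ≤ t - s := by linarith [hs.2]
      rw [Real.norm_eq_abs, abs_mul, abs_of_nonneg (hφ_nonneg _ h1)]
      exact mul_le_mul (hCφ _ h1) (hC s ⟨hs.1.le, hs.2⟩) (abs_nonneg _) hCφ0
  -- nonnegativity of lam
  have hlam_nonneg : ∀ t : ℝ, 0 ≤ t → 0 ≤ lam t := by
    by_contra h
    push_neg at h
    obtain ⟨t0, ht0, hneg⟩ := h
    set S := {t : ℝ | 0 ≤ t ∧ lam t < 0} with hS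
    have hSne : S.Nonempty := ⟨t0, ht0, hneg⟩
    have hSbdd : BddBelow S := ⟨0, fun x hx => hx.1⟩
    set τ := sInf S with hτ
    have hτ0 : 0 ≤ τ := le_csInf hSne fun x hx => hx.1
    set δ : ℝ := 1 / (2 * (Cφ + 1)) with hδ
    have hδpos : 0 < δ := by positivity
    have hδle : Cφ * δ ≤ 1 / 2 := by
      rw [hδ]
      rw [mul_one_div, div_le_div_iff₀ (by positivity) (by norm_num)]
      linarith
    obtain ⟨C, hC⟩ := hlam_locbdd (τ + δ)
    have hC0 : 0 ≤ C := (abs_nonneg _).trans (hC 0 ⟨le_rfl, by linarith⟩)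
    have key : ∀ n : ℕ, ∀ t, τ ≤ t → t ≤ τ + δ → -(C / 2 ^ n) ≤ lam t := by
      intro n
      induction n with
      | zero =>
        intro t h1 h2
        simpa using (abs_le.mp (hC t ⟨le_trans hτ0 h1, h2⟩)).1
      | succ n ih =>
        intro t h1 h2
        have ht0' : 0 ≤ t := le_trans hτ0 h1
        have hint : IntervalIntegrable (fun s => φ (t - s) * lam s) volume 0 t :=
          hker t ht0'
        have hsub1 : Set.uIcc 0 τ ⊆ Set.uIcc 0 t := by
          rw [Set.uIcc_of_le hτ0, Set.uIcc_of_le ht0']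
          exact Set.Icc_subset_Icc le_rfl h1
        have hsub2 : Set.uIcc τ t ⊆ Set.uIcc 0 t := by
          rw [Set.uIcc_of_le h1, Set.uIcc_of_le ht0']
          exact Set.Icc_subset_Icc hτ0 le_rfl
        have hsplit : (∫ s in (0:ℝ)..t, φ (t - s) * lam s)
            = (∫ s in (0:ℝ)..τ, φ (t - s) * lam s)
              + ∫ s in τ..t, φ (t - s) * lam s :=
          (intervalIntegral.integral_add_adjacent_intervals (hint.mono_set hsub1)
            (hint.mono_set hsub2)).symm
        have hA : 0 ≤ ∫ s in (0:ℝ)..τ, φ (t - s) * lam s := by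
          apply intervalIntegral.integral_nonneg_of_ae_restrict hτ0
          have hne : ∀ᵐ s : ℝ ∂volume, s ≠ τ := by
            rw [ae_iff]
            simp only [not_not]
            simpa using Real.volume_singleton (a := τ)
          filter_upwards [ae_restrict_mem measurableSet_Icc, ae_restrict_of_ae hne]
            with s hs hsne
          have hsτ : s < τ := lt_of_le_of_ne hs.2 hsne
          have hlam_s : 0 ≤ lam s := by
            by_contra hc
            push_neg at hc
            exact absurd (csInf_le hSbdd ⟨hs.1, hc⟩) (not_le.mpr hsτ)
          exact mul_nonneg (hφ_nonneg _ (by linarith [hs.2])) hlam_s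
        have hB : -(Cφ * (C / 2 ^ n)) * (t - τ) ≤ ∫ s in τ..t, φ (t - s) * lam s := by
          have hmono : (∫ s in τ..t, (-(Cφ * (C / 2 ^ n)) : ℝ))
              ≤ ∫ s in τ..t, φ (t - s) * lam s := by
            apply intervalIntegral.integral_mono_on h1 intervalIntegrable_const
              (hint.mono_set hsub2)
            intro s hs
            have hts : 0 ≤ t - s := by linarith [hs.2]
            have hls : -(C / 2 ^ n) ≤ lam s := ih s hs.1 (le_trans hs.2 h2)
            have hX : (0:ℝ) ≤ C / 2 ^ n := by positivity
            rcases le_or_gt 0 (lam s) with hl | hl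
            · have : (0:ℝ) ≤ φ (t - s) * lam s := mul_nonneg (hφ_nonneg _ hts) hl
              nlinarith
            · calc -(Cφ * (C / 2 ^ n)) = Cφ * (-(C / 2 ^ n)) := by ring
                _ ≤ Cφ * lam s := mul_le_mul_of_nonneg_left hls hCφ0
                _ ≤ φ (t - s) * lam s := mul_le_mul_of_nonpos_right (hCφ _ hts) hl.le
          calc -(Cφ * (C / 2 ^ n)) * (t - τ)
              = ∫ s in τ..t, (-(Cφ * (C / 2 ^ n)) : ℝ) := by
                rw [intervalIntegral.integral_const, smul_eq_mul]; ring
            _ ≤ _ := hmono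
        have hX : (0:ℝ) ≤ C / 2 ^ n := by positivity
        have hfin : Cφ * (C / 2 ^ n) * (t - τ) ≤ C / 2 ^ (n + 1) := by
          have h3 : Cφ * (t - τ) ≤ 1 / 2 := by
            calc Cφ * (t - τ) ≤ Cφ * δ :=
                  mul_le_mul_of_nonneg_left (by linarith) hCφ0
              _ ≤ 1 / 2 := hδle
          calc Cφ * (C / 2 ^ n) * (t - τ) = (Cφ * (t - τ)) * (C / 2 ^ n) := by ring
            _ ≤ (1 / 2) * (C / 2 ^ n) := mul_le_mul_of_nonneg_right h3 hX
            _ = C / 2 ^ (n + 1) := by ring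
        have heq := hlam_sol t ht0'
        rw [hsplit] at heq
        have hμt := hμ_pos t ht0'
        nlinarith [hA, hB, hfin]
    have hpos : ∀ t, τ ≤ t → t ≤ τ + δ → 0 ≤ lam t := by
      intro t h1 h2
      have hlim0 : Tendsto (fun n : ℕ => -(C / 2 ^ n)) atTop (𝓝 0) := by
        have h := tendsto_pow_atTop_nhds_zero_of_lt_one
          (by norm_num : (0:ℝ) ≤ 1 / 2) (by norm_num : (1/2:ℝ) < 1)
        have h2' := (h.const_mul C).neg
        simp only [mul_zero, neg_zero] at h2'
        refine h2'.congr fun n => ?_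
        rw [div_pow]
        ring
      exact le_of_tendsto' hlim0 fun n => key n t h1 h2
    obtain ⟨s, hsS, hslt⟩ := exists_lt_of_csInf_lt hSne
      (by linarith : sInf S < τ + δ)
    exact absurd (hpos s (csInf_le hSbdd hsS) hslt.le) (not_le.mpr hsS.2)
  -- global bound on lam
  have hM : ∃ M : ℝ, 0 ≤ M ∧ ∀ t : ℝ, 0 ≤ t → |lam t| ≤ M := by
    obtain ⟨T, hT⟩ := eventually_atTop.mp
      (hlam_lim.abs.eventually_lt_const (lt_add_one |L|))
    obtain ⟨C, hC⟩ := hlam_locbdd T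
    refine ⟨max (max C (|L| + 1)) 0, le_max_right _ _, fun t ht => ?_⟩
    rcases le_total t T with h | h
    · exact le_trans (hC t ⟨ht, h⟩) (le_trans (le_max_left _ _) (le_max_left _ _))
    · exact le_trans (hT t h).le (le_trans (le_max_right _ _) (le_max_left _ _))
  obtain ⟨M, hM0, hMb⟩ := hM
  set I : ℝ := ∫ t in Set.Ioi (0:ℝ), φ t with hIdef
  have hI0 : 0 ≤ I :=
    setIntegral_nonneg measurableSet_Ioi fun x hx => hφ_nonneg x (le_of_lt hx)
  -- rewrite the convolution as an integral over Ioi 0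
  have hG : ∀ t : ℝ, 0 ≤ t → (∫ s in (0:ℝ)..t, φ (t - s) * lam s)
      = ∫ u in Set.Ioi (0:ℝ),
          Set.indicator (Set.Ioc 0 t) (fun u => φ u * lam (t - u)) u := by
    intro t ht
    have h1 : (∫ s in (0:ℝ)..t, φ (t - s) * lam s)
        = ∫ u in (0:ℝ)..t, φ u * lam (t - u) := by
      have h := intervalIntegral.integral_comp_sub_left (a := 0) (b := t)
        (fun u => φ u * lam (t - u)) t
      simp only [sub_sub_cancel, sub_zero, sub_self] at h
      exact h
    rw [h1, intervalIntegral.integral_of_le ht,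
      MeasureTheory.integral_indicator measurableSet_Ioc,
      Measure.restrict_restrict measurableSet_Ioc,
      Set.inter_eq_self_of_subset_left Set.Ioc_subset_Ioi_self]
  -- dominated convergence
  have hconv : Tendsto (fun t => ∫ u in Set.Ioi (0:ℝ),
      Set.indicator (Set.Ioc 0 t) (fun u => φ u * lam (t - u)) u) atTop
      (𝓝 (∫ u in Set.Ioi (0:ℝ), φ u * L)) := by
    apply tendsto_integral_filter_of_dominated_convergence (bound := fun u => M * φ u)
    · filter_upwards with t
      exact ((hφ_meas.mul (hlam_meas.comp
        (measurable_const.sub measurable_id))).indicator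
        measurableSet_Ioc).aestronglyMeasurable
    · filter_upwards with t
      filter_upwards [ae_restrict_mem measurableSet_Ioi] with u hu
      by_cases hc : u ∈ Set.Ioc 0 t
      · rw [Set.indicator_of_mem hc, Real.norm_eq_abs, abs_mul,
          abs_of_nonneg (hφ_nonneg u hu.le)]
        calc φ u * |lam (t - u)|
            ≤ φ u * M := mul_le_mul_of_nonneg_left
              (hMb _ (by linarith [hc.2])) (hφ_nonneg u hu.le)
          _ = M * φ u := mul_comm _ _
      · rw [Set.indicator_of_notMem hc]
        simpa using mul_nonneg hM0 (hφ_nonneg u hu.le)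
    · exact hφ_int.const_mul M
    · filter_upwards [ae_restrict_mem measurableSet_Ioi] with u hu
      have h' : Tendsto (fun t : ℝ => t + -u) atTop atTop :=
        tendsto_atTop_add_const_right atTop (-u) tendsto_id
      apply Tendsto.congr' _ ((hlam_lim.comp h').const_mul (φ u))
      filter_upwards [eventually_ge_atTop u] with t ht
      simp [Set.indicator_of_mem (Set.mem_Ioc.mpr ⟨hu, ht⟩ : u ∈ Set.Ioc 0 t),
        sub_eq_add_neg]
  have hIL : (∫ u in Set.Ioi (0:ℝ), φ u * L) = I * L :=
    integral_mul_const L φ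
  rw [hIL] at hconv
  have hconv' : Tendsto (fun t => ∫ s in (0:ℝ)..t, φ (t - s) * lam s) atTop
      (𝓝 (I * L)) := by
    apply hconv.congr'
    filter_upwards [eventually_ge_atTop (0:ℝ)] with t ht
    exact (hG t ht).symm
  have h' : Tendsto lam atTop (𝓝 (μinf + I * L)) := by
    apply (hμ_lim.add hconv').congr'
    filter_upwards [eventually_ge_atTop (0:ℝ)] with t ht
    exact (hlam_sol t ht).symm
  have hLeq : L = μinf + I * L := tendsto_nhds_unique hlam_lim h'
  have hL0 : 0 ≤ L :=
    ge_of_tendsto hlam_lim ((eventually_ge_atTop (0:ℝ)).mono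
      fun t ht => hlam_nonneg t ht)
  have hLpos : 0 < L := by
    rcases hL0.lt_or_eq with h | h
    · exact h
    · exfalso; rw [← h] at hLeq; simp at hLeq; linarith
  have hIlt : I < 1 := by
    by_contra hc
    push_neg at hc
    have : 1 * L ≤ I * L := mul_le_mul_of_nonneg_right hc hLpos.le
    linarith
  refine ⟨hIlt, ?_⟩
  rw [eq_div_iff (ne_of_gt (by linarith : (0:ℝ) < 1 - I))]
  linear_combination hLeq
end

section
/- Let φ : [0,∞) → ℝ be a bounded, measurable, integrable function with φ(t) > 0 for all t ≥ 0 and ∫₀^∞ φ(t) dt = 1 (the critical unstable condition), and let μ : [0,∞) → ℝ be a bounded measurable function with μ(t) > 0 for all t ≥ 0 and lim_{t→∞} μ(t) = μ∞ > 0. Then the unique locally bounded measurable solution λ̄ of the Volterra integral equation λ̄(t) = μ(t) + ∫₀ᵗ φ(t−s) λ̄(s) ds satisfies lim_{t→∞} λ̄(t) = ∞. -/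
open MeasureTheory Filter

/-!
Since `μ ≥ 0` and the kernel is nonnegative, a Gronwall iteration (the negative part of `λ̄` is
at most `M (C t)ⁿ / n!` for every `n`, with `C` a bound of `φ`) shows `λ̄ ≥ 0`. Then the
criticality `∫ φ = 1` makes every level of `λ̄` reproduce itself: if `λ̄ ≥ c` from time `T` on,
then `λ̄(t) ≥ μ(t) + c ∫₀^{t-T} φ → μ∞ + c`, so eventually `λ̄ ≥ c + μ∞/2`. Iterating, `λ̄`
eventually exceeds `n μ∞/2` for every `n`.
-/

open Set

variable {k f g μ lam : ℝ → ℝ} {C : ℝ}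

lemma LocallyBddOn.neg (hf : LocallyBddOn f) : LocallyBddOn fun t => -f t :=
  fun T => (hf T).imp fun _ hC t ht => (abs_neg (f t)).trans_le (hC t ht)

lemma LocallyBddOn.intervalIntegrable_comp_sub_mul (hg : LocallyBddOn g) (hg_meas : Measurable g)
    (hk_meas : Measurable k) (hk : ∀ s, 0 ≤ s → |k s| ≤ C) {a b t : ℝ}
    (ha : 0 ≤ a) (hab : a ≤ b) (hbt : b ≤ t) :
    IntervalIntegrable (fun s => k (t - s) * g s) volume a b := by
  obtain ⟨M, hM⟩ := hg t
  refine IntegrableOn.intervalIntegrable (Measure.integrableOn_of_bounded (M := C * M)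
    measure_Icc_lt_top.ne ?_ ?_)
  · exact ((hk_meas.comp (measurable_const.sub measurable_id)).mul hg_meas).aestronglyMeasurable
  · rw [uIcc_of_le hab]
    filter_upwards [ae_restrict_mem measurableSet_Icc] with s hs
    have hks := hk (t - s) (by linarith [hs.2])
    rw [norm_mul, Real.norm_eq_abs, Real.norm_eq_abs]
    exact mul_le_mul hks (hM s ⟨ha.trans hs.1, hs.2.trans hbt⟩) (abs_nonneg _)
      ((abs_nonneg _).trans hks)

lemma integral_const_mul_pow_div_factorial (C M t : ℝ) (n : ℕ) :
    ∫ s in (0 : ℝ)..t, C * (M * (C * s) ^ n / n.factorial) =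
      M * (C * t) ^ (n + 1) / (n + 1).factorial := by
  have h : ∀ s : ℝ, C * (M * (C * s) ^ n / n.factorial) = C * M * C ^ n / n.factorial * s ^ n :=
    fun s => by rw [mul_pow]; ring
  simp only [h, intervalIntegral.integral_const_mul, integral_pow, Nat.factorial_succ]
  push_cast
  field_simp
  ring

lemma le_pow_div_factorial_of_le_volterra (hf_meas : Measurable f) (hf : LocallyBddOn f)
    (hk_meas : Measurable k) (hk_nonneg : ∀ s, 0 ≤ s → 0 ≤ k s) (hk_le : ∀ s, 0 ≤ s → k s ≤ C)
    (hle : ∀ t, 0 ≤ t → f t ≤ ∫ s in (0 : ℝ)..t, k (t - s) * f s)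
    {T M : ℝ} (hM : ∀ t ∈ Icc 0 T, |f t| ≤ M) (n : ℕ) :
    ∀ t ∈ Icc 0 T, f t ≤ M * (C * t) ^ n / n.factorial := by
  induction n with
  | zero => exact fun t ht => by simpa using (le_abs_self (f t)).trans (hM t ht)
  | succ n ih =>
    intro t ht
    have hC : 0 ≤ C := (hk_nonneg 0 le_rfl).trans (hk_le 0 le_rfl)
    have hM0 : 0 ≤ M := (abs_nonneg _).trans (hM t ht)
    have hk_abs : ∀ s, 0 ≤ s → |k s| ≤ C := fun s hs =>
      (abs_of_nonneg (hk_nonneg s hs)).trans_le (hk_le s hs)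
    calc f t ≤ ∫ s in (0 : ℝ)..t, k (t - s) * f s := hle t ht.1
      _ ≤ ∫ s in (0 : ℝ)..t, C * (M * (C * s) ^ n / n.factorial) := by
        refine intervalIntegral.integral_mono_on ht.1
          (hf.intervalIntegrable_comp_sub_mul hf_meas hk_meas hk_abs le_rfl ht.1 le_rfl)
          ((by fun_prop : Continuous _).intervalIntegrable _ _) fun s hs => ?_
        have hts : 0 ≤ t - s := by linarith [hs.2]
        have hp : 0 ≤ M * (C * s) ^ n / n.factorial := by
          have := mul_nonneg hC hs.1
          positivity
        calc k (t - s) * f s ≤ k (t - s) * (M * (C * s) ^ n / n.factorial) :=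
              mul_le_mul_of_nonneg_left (ih s ⟨hs.1, hs.2.trans ht.2⟩) (hk_nonneg _ hts)
          _ ≤ C * (M * (C * s) ^ n / n.factorial) :=
              mul_le_mul_of_nonneg_right (hk_le _ hts) hp
      _ = M * (C * t) ^ (n + 1) / (n + 1).factorial :=
        integral_const_mul_pow_div_factorial C M t n

lemma nonpos_of_le_volterra (hf_meas : Measurable f) (hf : LocallyBddOn f)
    (hk_meas : Measurable k) (hk_nonneg : ∀ s, 0 ≤ s → 0 ≤ k s) (hk_le : ∀ s, 0 ≤ s → k s ≤ C)
    (hle : ∀ t, 0 ≤ t → f t ≤ ∫ s in (0 : ℝ)..t, k (t - s) * f s) {t : ℝ} (ht : 0 ≤ t) :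
    f t ≤ 0 := by
  obtain ⟨M, hM⟩ := hf t
  have hlim : Tendsto (fun n : ℕ => M * (C * t) ^ n / n.factorial) atTop (nhds 0) := by
    simpa [mul_div_assoc] using (FloorSemiring.tendsto_pow_div_factorial_atTop (C * t)).const_mul M
  exact ge_of_tendsto' hlim fun n =>
    le_pow_div_factorial_of_le_volterra hf_meas hf hk_meas hk_nonneg hk_le hle hM n t ⟨ht, le_rfl⟩

lemma VolterraSol.nonneg (hsol : VolterraSol k μ lam) (hμ : ∀ t, 0 ≤ t → 0 ≤ μ t)
    (hlam_meas : Measurable lam) (hlam : LocallyBddOn lam) (hk_meas : Measurable k)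
    (hk_nonneg : ∀ s, 0 ≤ s → 0 ≤ k s) (hk_le : ∀ s, 0 ≤ s → k s ≤ C) {t : ℝ} (ht : 0 ≤ t) :
    0 ≤ lam t := by
  have hle : ∀ t, 0 ≤ t → -lam t ≤ ∫ s in (0 : ℝ)..t, k (t - s) * -lam s := fun t ht => by
    simp only [mul_neg, intervalIntegral.integral_neg, hsol t ht]
    linarith [hμ t ht]
  simpa using nonpos_of_le_volterra hlam_meas.neg hlam.neg hk_meas hk_nonneg hk_le hle ht

lemma mul_integral_le_integral_comp_sub_mul (hg_meas : Measurable g) (hg : LocallyBddOn g)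
    (hk_meas : Measurable k) (hk_nonneg : ∀ s, 0 ≤ s → 0 ≤ k s) (hk_le : ∀ s, 0 ≤ s → k s ≤ C)
    {c T t : ℝ} (hT : 0 ≤ T) (hTt : T ≤ t) (hg_nonneg : ∀ s ∈ Icc 0 T, 0 ≤ g s)
    (hgc : ∀ s ∈ Icc T t, c ≤ g s) :
    c * ∫ s in (0 : ℝ)..t - T, k s ≤ ∫ s in (0 : ℝ)..t, k (t - s) * g s := by
  have hk_abs : ∀ s, 0 ≤ s → |k s| ≤ C := fun s hs =>
    (abs_of_nonneg (hk_nonneg s hs)).trans_le (hk_le s hs)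
  have hkc : LocallyBddOn fun _ => c := fun _ => ⟨|c|, fun _ _ => le_rfl⟩
  have hhead : 0 ≤ ∫ s in (0 : ℝ)..T, k (t - s) * g s :=
    intervalIntegral.integral_nonneg hT fun s hs =>
      mul_nonneg (hk_nonneg _ (by linarith [hs.2])) (hg_nonneg s hs)
  have htail : c * ∫ s in (0 : ℝ)..t - T, k s ≤ ∫ s in T..t, k (t - s) * g s := by
    have hshift : ∫ s in T..t, k (t - s) = ∫ s in (0 : ℝ)..t - T, k s := by
      rw [intervalIntegral.integral_comp_sub_left, sub_self]
    rw [mul_comm c, ← hshift, ← intervalIntegral.integral_mul_const]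
    exact intervalIntegral.integral_mono_on hTt
      (hkc.intervalIntegrable_comp_sub_mul measurable_const hk_meas hk_abs hT hTt le_rfl)
      (hg.intervalIntegrable_comp_sub_mul hg_meas hk_meas hk_abs hT hTt le_rfl) fun s hs =>
        mul_le_mul_of_nonneg_left (hgc s hs) (hk_nonneg _ (by linarith [hs.2]))
  rw [← intervalIntegral.integral_add_adjacent_intervals
    (hg.intervalIntegrable_comp_sub_mul hg_meas hk_meas hk_abs le_rfl hT hTt)
    (hg.intervalIntegrable_comp_sub_mul hg_meas hk_meas hk_abs hT hTt le_rfl)]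
  linarith

lemma VolterraSol.eventually_ge_of_eventually_ge (hsol : VolterraSol k μ lam)
    (hlam_meas : Measurable lam) (hlam : LocallyBddOn lam) (hlam_nonneg : ∀ t, 0 ≤ t → 0 ≤ lam t)
    (hk_meas : Measurable k) (hk_nonneg : ∀ s, 0 ≤ s → 0 ≤ k s) (hk_le : ∀ s, 0 ≤ s → k s ≤ C)
    (hk_int : IntegrableOn k (Ioi 0)) (hk_one : ∫ s in Ioi (0 : ℝ), k s = 1) {μinf : ℝ}
    (hμ : Tendsto μ atTop (nhds μinf)) {a c : ℝ} (ha : a < μinf + c)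
    (hc : ∀ᶠ t in atTop, c ≤ lam t) : ∀ᶠ t in atTop, a ≤ lam t := by
  obtain ⟨T₀, hT₀⟩ := eventually_atTop.1 hc
  set T := max T₀ 0
  have hmass : Tendsto (fun t => ∫ s in (0 : ℝ)..t - T, k s) atTop (nhds 1) :=
    hk_one ▸ intervalIntegral_tendsto_integral_Ioi 0 hk_int
      (tendsto_atTop_add_const_right _ _ tendsto_id)
  have hlow : Tendsto (fun t => μ t + c * ∫ s in (0 : ℝ)..t - T, k s) atTop (nhds (μinf + c)) := by
    simpa using hμ.add (hmass.const_mul c)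
  filter_upwards [hlow.eventually (eventually_ge_nhds ha), eventually_ge_atTop T] with t hat hTt
  have hT : 0 ≤ T := le_max_right _ _
  rw [hsol t (hT.trans hTt)]
  exact hat.trans (add_le_add_right (mul_integral_le_integral_comp_sub_mul hlam_meas hlam hk_meas
    hk_nonneg hk_le hT hTt (fun s hs => hlam_nonneg s hs.1)
    fun s hs => hT₀ s ((le_max_left _ _).trans hs.1)) _)

theorem volterra_critical_blowup_general
    (φ μ lam : ℝ → ℝ) (μinf : ℝ)
    (hφ_meas : Measurable φ)
    (hφ_pos : ∀ t : ℝ, 0 ≤ t → 0 < φ t)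
    (hφ_bdd : ∃ C : ℝ, ∀ t : ℝ, 0 ≤ t → φ t ≤ C)
    (hφ_int : IntegrableOn φ (Set.Ioi 0))
    (hφ_crit : ∫ t in Set.Ioi (0 : ℝ), φ t = 1)
    (hμ_pos : ∀ t : ℝ, 0 ≤ t → 0 < μ t)
    (hμinf_pos : 0 < μinf)
    (hμ_lim : Tendsto μ atTop (nhds μinf))
    (hlam_meas : Measurable lam)
    (hlam_locbdd : LocallyBddOn lam)
    (hlam_sol : VolterraSol φ μ lam) :
    Tendsto lam atTop atTop := by
  obtain ⟨C, hφ_le⟩ := hφ_bdd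
  have hφ_nonneg : ∀ t, 0 ≤ t → 0 ≤ φ t := fun t ht => (hφ_pos t ht).le
  have hlam_nonneg : ∀ t, 0 ≤ t → 0 ≤ lam t := fun t ht =>
    hlam_sol.nonneg (fun s hs => (hμ_pos s hs).le) hlam_meas hlam_locbdd hφ_meas hφ_nonneg hφ_le ht
  have hlevels : ∀ n : ℕ, ∀ᶠ t in atTop, n * (μinf / 2) ≤ lam t := by
    intro n
    induction n with
    | zero => simpa using eventually_ge_atTop 0 |>.mono hlam_nonneg
    | succ n ih =>
      refine hlam_sol.eventually_ge_of_eventually_ge hlam_meas hlam_locbdd hlam_nonneg hφ_meas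
        hφ_nonneg hφ_le hφ_int hφ_crit hμ_lim ?_ ih
      push_cast
      linarith
  refine tendsto_atTop.2 fun b => ?_
  obtain ⟨n, hn⟩ := exists_nat_ge (b / (μinf / 2))
  exact (hlevels n).mono fun t ht => ((div_le_iff₀ (by positivity)).1 hn).trans ht

/-- Under the critical unstable condition `‖φ‖₁ = 1` (with `φ > 0` pointwise) and
`μ(t) → μ∞ > 0`, the locally bounded measurable solution of the Volterra equation
blows up: `λ̄(t) → ∞` as `t → ∞`. -/
theorem volterra_critical_blowup
    (φ μ lam : ℝ → ℝ) (μinf : ℝ)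
    (hφ_meas : Measurable φ)
    (hφ_pos : ∀ t : ℝ, 0 ≤ t → 0 < φ t)
    (hφ_bdd : ∃ C : ℝ, ∀ t : ℝ, 0 ≤ t → φ t ≤ C)
    (hφ_int : IntegrableOn φ (Set.Ioi 0))
    (hφ_crit : ∫ t in Set.Ioi (0 : ℝ), φ t = 1)
    (hμ_meas : Measurable μ)
    (hμ_pos : ∀ t : ℝ, 0 ≤ t → 0 < μ t)
    (hμ_bdd : ∃ C : ℝ, ∀ t : ℝ, 0 ≤ t → |μ t| ≤ C)
    (hμinf_pos : 0 < μinf)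
    (hμ_lim : Tendsto μ atTop (nhds μinf))
    (hlam_meas : Measurable lam)
    (hlam_locbdd : LocallyBddOn lam)
    (hlam_sol : VolterraSol φ μ lam) :
    Tendsto lam atTop atTop :=
  volterra_critical_blowup_general φ μ lam μinf hφ_meas hφ_pos hφ_bdd hφ_int hφ_crit hμ_pos
    hμinf_pos hμ_lim hlam_meas hlam_locbdd hlam_sol
end

section
/- For all real numbers β₁, β₂, β₃ and all λ ∈ ℝ, the characteristic polynomial of the matrix Φ₀ factors as det(Φ₀ − λ I₄) = (λ − λ₁)(λ − λ₂)(λ − λ₃)(λ − λ₄), where λ₁ = β₁ + 2β₂ + β₂β₃, λ₂ = 1 + β₂ − β₂β₃, λ₃ = β₁ + β₂β₃, λ₄ = 1 − β₂ − β₂β₃. -/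
open Matrix

def Phi0 (β₁ β₂ β₃ : ℝ) : Matrix (Fin 4) (Fin 4) ℝ :=
  !![1, 0, β₂, β₁ + β₂ + β₂ * β₃ - 1;
     0, 1, β₁ + β₂ + β₂ * β₃ - 1, β₂;
     β₂, β₂ * β₃, β₁ + β₂, 0;
     β₂ * β₃, β₂, 0, β₁ + β₂]

/-!
Each 2 × 2 block of `Φ₀` has the form `[[a, b], [b, a]]`, so `Φ₀` commutes with the involution
swapping the coordinates `0 ↔ 1` and `2 ↔ 3`. It therefore preserves the symmetric and the
antisymmetric vectors of that involution, each a plane, and becomes block diagonal in a basis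
adapted to them. The two 2 × 2 blocks have eigenvalues `{λ₁, λ₄}` and `{λ₂, λ₃}`.
-/

namespace Matrix

variable {R : Type*} [CommRing R]

theorem det_sub_smul_one_eq_of_mul_eq_mul {n : Type*} [Fintype n] [DecidableEq n]
    {M N H : Matrix n n R} (hH : IsUnit H.det) (h : M * H = H * N) (l : R) :
    (M - l • 1).det = (N - l • 1).det := by
  have h' : (M - l • 1) * H = H * (N - l • 1) := by
    rw [sub_mul, mul_sub, h, Matrix.smul_mul, Matrix.mul_smul, one_mul, mul_one]
  exact hH.mul_left_cancel (by rw [mul_comm, ← det_mul, h', det_mul])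

theorem det_fin_two_sub_smul_one (A : Matrix (Fin 2) (Fin 2) R) (l : R) :
    (A - l • 1).det = (A 0 0 - l) * (A 1 1 - l) - A 0 1 * A 1 0 := by
  simp [det_fin_two]

def finBlockDiagonal {m k : ℕ} (A : Matrix (Fin m) (Fin m) R) (D : Matrix (Fin k) (Fin k) R) :
    Matrix (Fin (m + k)) (Fin (m + k)) R :=
  reindex finSumFinEquiv finSumFinEquiv (fromBlocks A 0 0 D)

theorem det_finBlockDiagonal {m k : ℕ} (A : Matrix (Fin m) (Fin m) R)
    (D : Matrix (Fin k) (Fin k) R) : (finBlockDiagonal A D).det = A.det * D.det := by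
  rw [finBlockDiagonal, det_reindex_self, det_fromBlocks_zero₁₂]

theorem finBlockDiagonal_sub_smul_one {m k : ℕ} (A : Matrix (Fin m) (Fin m) R)
    (D : Matrix (Fin k) (Fin k) R) (l : R) :
    finBlockDiagonal A D - l • 1 = finBlockDiagonal (A - l • 1) (D - l • 1) := by
  ext i j
  obtain ⟨i, rfl⟩ := finSumFinEquiv.surjective i
  obtain ⟨j, rfl⟩ := finSumFinEquiv.surjective j
  simp only [finBlockDiagonal, reindex_apply, sub_apply, smul_apply, submatrix_apply,
    Equiv.symm_apply_apply, one_apply, EmbeddingLike.apply_eq_iff_eq]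
  rcases i with i | i <;> rcases j with j | j <;> simp [one_apply]

theorem finBlockDiagonal_fin_two_two (A D : Matrix (Fin 2) (Fin 2) R) :
    finBlockDiagonal A D =
      !![A 0 0, A 0 1, 0, 0;
         A 1 0, A 1 1, 0, 0;
         0, 0, D 0 0, D 0 1;
         0, 0, D 1 0, D 1 1] := by
  ext i j
  fin_cases i <;> fin_cases j <;> rfl

end Matrix

/-- The columns are `e₀ + e₁`, `e₂ + e₃`, `e₀ - e₁`, `e₂ - e₃`. -/
def swapEigenbasis : Matrix (Fin 4) (Fin 4) ℝ :=
  !![1, 0, 1, 0;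
     1, 0, -1, 0;
     0, 1, 0, 1;
     0, 1, 0, -1]

def Phi0Sym (β₁ β₂ β₃ : ℝ) : Matrix (Fin 2) (Fin 2) ℝ :=
  !![1, β₁ + 2 * β₂ + β₂ * β₃ - 1;
     β₂ + β₂ * β₃, β₁ + β₂]

def Phi0Antisym (β₁ β₂ β₃ : ℝ) : Matrix (Fin 2) (Fin 2) ℝ :=
  !![1, 1 - β₁ - β₂ * β₃;
     β₂ - β₂ * β₃, β₁ + β₂]

theorem det_swapEigenbasis : swapEigenbasis.det = -4 := by
  simp [swapEigenbasis, det_succ_row_zero, Fin.sum_univ_succ, Fin.succAbove]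
  norm_num

theorem Phi0_mul_swapEigenbasis (β₁ β₂ β₃ : ℝ) :
    Phi0 β₁ β₂ β₃ * swapEigenbasis =
      swapEigenbasis * finBlockDiagonal (Phi0Sym β₁ β₂ β₃) (Phi0Antisym β₁ β₂ β₃) := by
  rw [finBlockDiagonal_fin_two_two]
  ext i j
  fin_cases i <;> fin_cases j <;>
    simp [Phi0, swapEigenbasis, Phi0Sym, Phi0Antisym, mul_apply, Fin.sum_univ_four] <;> ring

theorem det_Phi0Sym_sub_smul_one (β₁ β₂ β₃ l : ℝ) :
    (Phi0Sym β₁ β₂ β₃ - l • 1).det =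
      (l - (β₁ + 2 * β₂ + β₂ * β₃)) * (l - (1 - β₂ - β₂ * β₃)) := by
  rw [det_fin_two_sub_smul_one]
  change (1 - l) * (β₁ + β₂ - l) - (β₁ + 2 * β₂ + β₂ * β₃ - 1) * (β₂ + β₂ * β₃) = _
  ring

theorem det_Phi0Antisym_sub_smul_one (β₁ β₂ β₃ l : ℝ) :
    (Phi0Antisym β₁ β₂ β₃ - l • 1).det = (l - (1 + β₂ - β₂ * β₃)) * (l - (β₁ + β₂ * β₃)) := by
  rw [det_fin_two_sub_smul_one]
  change (1 - l) * (β₁ + β₂ - l) - (1 - β₁ - β₂ * β₃) * (β₂ - β₂ * β₃) = _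
  ring

/-- The characteristic polynomial of `Φ₀` factors:
`det(Φ₀ − λ I₄) = (λ − λ₁)(λ − λ₂)(λ − λ₃)(λ − λ₄)`. -/
theorem Phi0_charpoly_factors (β₁ β₂ β₃ l : ℝ) :
    (Phi0 β₁ β₂ β₃ - l • (1 : Matrix (Fin 4) (Fin 4) ℝ)).det =
      (l - (β₁ + 2 * β₂ + β₂ * β₃)) * (l - (1 + β₂ - β₂ * β₃)) *
      (l - (β₁ + β₂ * β₃)) * (l - (1 - β₂ - β₂ * β₃)) := by
  have hH : IsUnit swapEigenbasis.det := by rw [det_swapEigenbasis]; norm_num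
  rw [det_sub_smul_one_eq_of_mul_eq_mul hH (Phi0_mul_swapEigenbasis β₁ β₂ β₃) l,
    finBlockDiagonal_sub_smul_one, det_finBlockDiagonal, det_Phi0Sym_sub_smul_one,
    det_Phi0Antisym_sub_smul_one]
  ring
end

section
/- Let α ∈ (1/2, 1), κ > 0, and let φ : [0,∞) → [0,∞) be a bounded measurable integrable function such that lim_{t→∞} t^α ∫_t^∞ φ(s) ds = κ. Then for every real z > 0, lim_{T→∞} T^α ( ∫₀^∞ φ(s) ds − ∫₀^∞ e^{−z s / T} φ(s) ds ) = κ Γ(1−α) z^α, where Γ denotes the Gamma function. -/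
/-!
Writing `F t = ∫_t^∞ φ`, Fubini turns the Laplace defect into a Laplace transform of the tail:
`‖φ‖₁ - φ̂(λ) = ∫₀^∞ λ e^{-λu} F(u) du`. Substituting `u = T v` with `λ = z / T` gives
`T^α (‖φ‖₁ - φ̂(z/T)) = ∫₀^∞ z e^{-zv} T^α F(T v) dv`, whose integrand tends to
`z e^{-zv} κ v^{-α}`. Since `t ↦ t^α F t` is continuous on `[0, ∞)` with a finite limit, it is
bounded, so dominated convergence applies (`v^{-α}` is integrable at `0` because `α < 1`), and the
limit integral is `κ Γ(1-α) z^α`.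
-/

open MeasureTheory Filter Real Set Topology

lemma integral_mul_exp_neg_mul (c s : ℝ) :
    ∫ u in (0:ℝ)..s, c * exp (-(c * u)) = 1 - exp (-(c * s)) := by
  have hderiv : ∀ u ∈ uIcc 0 s,
      HasDerivAt (fun u => -exp (-(c * u))) (c * exp (-(c * u))) u := fun u _ => by
    simpa [mul_comm] using (((hasDerivAt_id u).const_mul c).fun_neg.exp).fun_neg
  rw [intervalIntegral.integral_eq_sub_of_hasDerivAt hderiv
    (Continuous.intervalIntegrable (by fun_prop) 0 s)]
  simp only [mul_zero, neg_zero, exp_zero, sub_neg_eq_add]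
  ring

lemma integral_one_sub_exp_mul_eq_integral_tail {φ : ℝ → ℝ} (hφ : IntegrableOn φ (Ioi 0))
    {c : ℝ} (hc : 0 < c) :
    ∫ s in Ioi 0, (1 - exp (-(c * s))) * φ s
      = ∫ u in Ioi 0, c * exp (-(c * u)) * ∫ s in Ioi u, φ s := by
  set f : ℝ → ℝ → ℝ := fun u s => (Ioi u).indicator (fun s => c * exp (-(c * u)) * φ s) s
  have hexp : IntegrableOn (fun u => c * exp (-(c * u))) (Ioi 0) := by
    have h := (exp_neg_integrableOn_Ioi 0 hc).const_mul c
    simp only [neg_mul] at h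
    exact h
  have hf : Integrable (Function.uncurry f)
      ((volume.restrict (Ioi 0)).prod (volume.restrict (Ioi 0))) :=
    (hexp.mul_prod hφ).indicator (measurableSet_lt measurable_fst measurable_snd)
  have hinner_s : ∀ s ∈ Ioi (0:ℝ), ∫ u in Ioi 0, f u s = (1 - exp (-(c * s))) * φ s := by
    intro s hs
    have : ∀ u, f u s = (Iio s).indicator (fun u => c * exp (-(c * u)) * φ s) u := fun u => rfl
    simp_rw [this, setIntegral_indicator measurableSet_Iio, Ioi_inter_Iio, integral_mul_const,
      ← integral_Ioc_eq_integral_Ioo, ← intervalIntegral.integral_of_le (mem_Ioi.1 hs).le,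
      integral_mul_exp_neg_mul]
  have hinner_u :
      ∀ u ∈ Ioi (0:ℝ), ∫ s in Ioi 0, f u s = c * exp (-(c * u)) * ∫ s in Ioi u, φ s := by
    intro u hu
    simp_rw [f, setIntegral_indicator measurableSet_Ioi,
      inter_eq_right.2 (Ioi_subset_Ioi (mem_Ioi.1 hu).le), integral_const_mul]
  calc ∫ s in Ioi 0, (1 - exp (-(c * s))) * φ s = ∫ s in Ioi 0, ∫ u in Ioi 0, f u s :=
        (setIntegral_congr_fun measurableSet_Ioi hinner_s).symm
    _ = ∫ u in Ioi 0, ∫ s in Ioi 0, f u s := (integral_integral_swap hf).symm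
    _ = _ := setIntegral_congr_fun measurableSet_Ioi hinner_u

lemma sub_integral_exp_mul_eq_integral_tail_comp_mul {φ : ℝ → ℝ} (hφ : IntegrableOn φ (Ioi 0))
    {z T : ℝ} (hz : 0 < z) (hT : 0 < T) :
    (∫ s in Ioi 0, φ s) - ∫ s in Ioi 0, exp (-z * s / T) * φ s
      = ∫ v in Ioi 0, z * exp (-(z * v)) * ∫ s in Ioi (T * v), φ s := by
  have hexp_eq : ∀ s, exp (-z * s / T) = exp (-(z / T * s)) := fun s => by ring_nf
  have hlaplace : IntegrableOn (fun s => exp (-z * s / T) * φ s) (Ioi 0) := by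
    refine hφ.bdd_mul (c := 1) (by fun_prop) ?_
    filter_upwards [ae_restrict_mem measurableSet_Ioi] with s hs
    rw [hexp_eq, norm_of_nonneg (exp_pos _).le, exp_le_one_iff, neg_nonpos]
    exact (mul_pos (div_pos hz hT) hs).le
  have hrescale := integral_comp_mul_left_Ioi
    (fun u => z / T * exp (-(z / T * u)) * ∫ s in Ioi u, φ s) 0 hT
  rw [mul_zero, smul_eq_mul] at hrescale
  calc (∫ s in Ioi 0, φ s) - ∫ s in Ioi 0, exp (-z * s / T) * φ s
      = ∫ s in Ioi 0, (1 - exp (-(z / T * s))) * φ s := by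
        rw [← integral_sub hφ hlaplace]
        congr 1; ext s; rw [hexp_eq]; ring
    _ = ∫ u in Ioi 0, z / T * exp (-(z / T * u)) * ∫ s in Ioi u, φ s :=
        integral_one_sub_exp_mul_eq_integral_tail hφ (div_pos hz hT)
    _ = ∫ v in Ioi 0, z * exp (-(z * v)) * ∫ s in Ioi (T * v), φ s := by
        rw [← mul_inv_cancel_left₀ hT.ne' (∫ u in Ioi 0, _), ← hrescale, ← integral_const_mul]
        congr 1; ext v
        field_simp

lemma exists_norm_le_of_continuousOn_Ici_of_tendsto {E : Type*} [NormedAddCommGroup E]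
    {g : ℝ → E} {a : ℝ} {L : E} (hg : ContinuousOn g (Ici a)) (hlim : Tendsto g atTop (𝓝 L)) :
    ∃ M, ∀ t ∈ Ici a, ‖g t‖ ≤ M := by
  obtain ⟨b, hb⟩ :=
    eventually_atTop.1 (hlim.norm.eventually (eventually_le_nhds (lt_add_one ‖L‖)))
  obtain ⟨C, hC⟩ :=
    isCompact_Icc.exists_bound_of_continuousOn (hg.mono (Icc_subset_Ici_self : Icc a b ⊆ Ici a))
  refine ⟨max C (‖L‖ + 1), fun t ht => ?_⟩
  rcases le_total t b with htb | hbt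
  · exact (hC t ⟨ht, htb⟩).trans (le_max_left _ _)
  · exact (hb t hbt).trans (le_max_right _ _)

lemma integral_mul_exp_neg_mul_mul_rpow_neg {α z : ℝ} (hα : α < 1) (hz : 0 < z) :
    ∫ v in Ioi 0, z * exp (-(z * v)) * v ^ (-α) = Gamma (1 - α) * z ^ α := by
  have hGamma := integral_rpow_mul_exp_neg_mul_Ioi (sub_pos.2 hα) hz
  rw [sub_sub_cancel_left, one_div, inv_rpow hz.le, ← rpow_neg hz.le, neg_sub] at hGamma
  calc ∫ v in Ioi 0, z * exp (-(z * v)) * v ^ (-α)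
      = z * ∫ v in Ioi 0, v ^ (-α) * exp (-(z * v)) := by
        rw [← integral_const_mul]; congr 1; ext v; ring
    _ = Gamma (1 - α) * z ^ α := by
        rw [hGamma, ← mul_assoc, mul_comm z, ← rpow_add_one hz.ne', sub_add_cancel, mul_comm]

lemma rpow_mul_comp_mul_eq {F : ℝ → ℝ} {α T v : ℝ} (hT : 0 ≤ T) (hv : 0 < v) :
    T ^ α * F (T * v) = v ^ (-α) * ((T * v) ^ α * F (T * v)) := by
  rw [mul_rpow hT hv.le, rpow_neg hv.le]
  field_simp

theorem tendsto_rpow_mul_integral_exp_mul_comp_mul {F : ℝ → ℝ} {α κ z : ℝ} (hα₀ : 0 ≤ α)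
    (hα₁ : α < 1) (hF : ContinuousOn F (Ici 0))
    (hlim : Tendsto (fun t => t ^ α * F t) atTop (𝓝 κ)) (hz : 0 < z) :
    Tendsto (fun T => T ^ α * ∫ v in Ioi 0, z * exp (-(z * v)) * F (T * v)) atTop
      (𝓝 (κ * Gamma (1 - α) * z ^ α)) := by
  obtain ⟨M, hM⟩ := exists_norm_le_of_continuousOn_Ici_of_tendsto
    ((continuousOn_id.rpow_const fun _ _ => Or.inr hα₀).mul hF) hlim
  have hpointwise : ∀ v > 0, Tendsto (fun T => T ^ α * F (T * v)) atTop (𝓝 (v ^ (-α) * κ)) :=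
    fun v hv => ((hlim.comp (tendsto_id.atTop_mul_const hv)).const_mul (v ^ (-α))).congr'
      (by filter_upwards [eventually_ge_atTop 0] with T hT
          exact (rpow_mul_comp_mul_eq hT hv).symm)
  have hbound_int : IntegrableOn (fun v => z * exp (-(z * v)) * (M * v ^ (-α))) (Ioi 0) := by
    have h : IntegrableOn (fun v => z * M * (v ^ (-α) * exp (-z * v ^ (1:ℝ)))) (Ioi 0) :=
      (integrableOn_rpow_mul_exp_neg_mul_rpow (neg_lt_neg hα₁) one_pos hz).const_mul (z * M)
    refine h.congr_fun (fun v _ => ?_) measurableSet_Ioi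
    simp only [rpow_one, neg_mul]
    ring
  have hlim_int : Tendsto (fun T => ∫ v in Ioi 0, z * exp (-(z * v)) * (T ^ α * F (T * v))) atTop
      (𝓝 (∫ v in Ioi 0, z * exp (-(z * v)) * (v ^ (-α) * κ))) := by
    refine tendsto_integral_filter_of_dominated_convergence _ ?_ ?_ hbound_int ?_
    · filter_upwards [eventually_gt_atTop 0] with T hT
      refine ContinuousOn.aestronglyMeasurable ?_ measurableSet_Ioi
      refine ((by fun_prop : Continuous fun v => z * exp (-(z * v))).continuousOn).mul
        (continuousOn_const.mul (hF.comp (continuousOn_const.mul continuousOn_id) ?_))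
      exact fun v hv => mem_Ici.2 (mul_pos hT hv).le
    · filter_upwards [eventually_gt_atTop 0] with T hT
      filter_upwards [ae_restrict_mem measurableSet_Ioi] with v hv
      rw [rpow_mul_comp_mul_eq hT.le hv, norm_mul, norm_mul, norm_mul, norm_of_nonneg hz.le,
        norm_of_nonneg (exp_pos _).le, norm_of_nonneg (rpow_nonneg (mem_Ioi.1 hv).le _),
        mul_comm M]
      exact mul_le_mul_of_nonneg_left (mul_le_mul_of_nonneg_left (hM _ (mul_pos hT hv).le)
        (rpow_nonneg (mem_Ioi.1 hv).le _)) (by positivity)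
    · filter_upwards [ae_restrict_mem measurableSet_Ioi] with v hv
      exact (hpointwise v hv).const_mul _
  have hvalue :
      ∫ v in Ioi 0, z * exp (-(z * v)) * (v ^ (-α) * κ) = κ * Gamma (1 - α) * z ^ α := by
    simp_rw [← mul_assoc, integral_mul_const, integral_mul_exp_neg_mul_mul_rpow_neg hα₁ hz]
    ring
  rw [hvalue] at hlim_int
  refine hlim_int.congr fun T => ?_
  rw [← integral_const_mul]
  congr 1; ext v; ring

theorem laplace_tail_asymptotics_general
    (α κ : ℝ) (φ : ℝ → ℝ)
    (hα : α ∈ Set.Ioo (1 / 2 : ℝ) 1)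
    (hφ_int : IntegrableOn φ (Set.Ioi 0))
    (htail : Tendsto (fun t : ℝ => t ^ α * ∫ s in Set.Ioi t, φ s) atTop (nhds κ)) :
    ∀ z : ℝ, 0 < z →
      Tendsto
        (fun T : ℝ => T ^ α *
          ((∫ s in Set.Ioi (0 : ℝ), φ s) -
            ∫ s in Set.Ioi (0 : ℝ), Real.exp (-z * s / T) * φ s))
        atTop (nhds (κ * Real.Gamma (1 - α) * z ^ α)) := by
  intro z hz
  refine (tendsto_rpow_mul_integral_exp_mul_comp_mul (by linarith [hα.1]) hα.2
    hφ_int.continuousOn_Ici_primitive_Ioi htail hz).congr' ?_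
  filter_upwards [eventually_gt_atTop 0] with T hT
  rw [sub_integral_exp_mul_eq_integral_tail_comp_mul hφ_int hz hT]

/-- If `φ ≥ 0` is bounded, measurable and integrable on `(0,∞)` with power-law tail
`t^α ∫_t^∞ φ → κ`, then for every `z > 0`,
`T^α (‖φ‖₁ − φ̂(z/T)) → κ Γ(1−α) z^α` as `T → ∞`. -/
theorem laplace_tail_asymptotics
    (α κ : ℝ) (φ : ℝ → ℝ)
    (hα : α ∈ Set.Ioo (1 / 2 : ℝ) 1)
    (hκ : 0 < κ)
    (hφ_meas : Measurable φ)
    (hφ_nonneg : ∀ t : ℝ, 0 ≤ t → 0 ≤ φ t)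
    (hφ_bdd : ∃ C : ℝ, ∀ t : ℝ, 0 ≤ t → φ t ≤ C)
    (hφ_int : IntegrableOn φ (Set.Ioi 0))
    (htail : Tendsto (fun t : ℝ => t ^ α * ∫ s in Set.Ioi t, φ s) atTop (nhds κ)) :
    ∀ z : ℝ, 0 < z →
      Tendsto
        (fun T : ℝ => T ^ α *
          ((∫ s in Set.Ioi (0 : ℝ), φ s) -
            ∫ s in Set.Ioi (0 : ℝ), Real.exp (-z * s / T) * φ s))
        atTop (nhds (κ * Real.Gamma (1 - α) * z ^ α)) :=
  laplace_tail_asymptotics_general α κ φ hα hφ_int htail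
end

section
/- Under the parameter assumptions 0 < β₂ < β₁ < 1, 0 < β₃ < 1, and β₁ + β₂β₃ < 1 < β₁ + β₂ + β₂β₃, let λ₁ = β₁+2β₂+β₂β₃ and let c = 1/λ₁. Then for every a ∈ (0,1): the matrix I₄ − a c Φ₀ is invertible, the matrix series Σ_{k=0}^∞ (a c)^k Φ₀^k converges and equals (I₄ − a c Φ₀)⁻¹, and for the vector Volterra equation Λ(t) = μ(t) + a ∫₀ᵗ φ(t−s) Φ₀ Λ(s) ds, where φ : [0,∞) → [0,∞) is bounded measurable with ∫₀^∞ φ(t) dt = c and μ : [0,∞) → ℝ⁴ is a bounded measurable function converging to a limit μ(∞) as t → ∞, every locally bounded measurable solution Λ satisfies lim_{t→∞} Λ(t) = (I₄ − a c Φ₀)⁻¹ μ(∞). -/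
open MeasureTheory Filter Matrix
open Topology intervalIntegral

lemma Phi0_nonneg {β₁ β₂ β₃ : ℝ} (h₂ : 0 < β₂) (h₁ : β₂ < β₁) (h₃ : 0 < β₃)
    (hgt : 1 < β₁ + β₂ + β₂ * β₃) : ∀ i j, 0 ≤ Phi0 β₁ β₂ β₃ i j := by
  intro i j
  fin_cases i <;> fin_cases j <;> simp [Phi0] <;> nlinarith

lemma Phi0_rowsum {β₁ β₂ β₃ : ℝ} :
    ∀ i, ∑ j, Phi0 β₁ β₂ β₃ i j = β₁ + 2 * β₂ + β₂ * β₃ := by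
  intro i
  fin_cases i <;> simp [Phi0, Fin.sum_univ_four] <;> ring

lemma norm_mulVec_le {n : Type*} [Fintype n] (M : Matrix n n ℝ) (r : ℝ) (hr : 0 ≤ r)
    (h0 : ∀ i j, 0 ≤ M i j) (hs : ∀ i, ∑ j, M i j ≤ r) (v : n → ℝ) :
    ‖M.mulVec v‖ ≤ r * ‖v‖ := by
  rw [pi_norm_le_iff_of_nonneg (by positivity)]
  intro i
  calc ‖M.mulVec v i‖ = |∑ j, M i j * v j| := by rfl
    _ ≤ ∑ j, |M i j * v j| := Finset.abs_sum_le_sum_abs _ _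
    _ ≤ ∑ j, M i j * ‖v‖ := by
        refine Finset.sum_le_sum fun j _ => ?_
        rw [abs_mul, abs_of_nonneg (h0 i j)]
        exact mul_le_mul_of_nonneg_left (by simpa using norm_le_pi_norm v j) (h0 i j)
    _ = (∑ j, M i j) * ‖v‖ := (Finset.sum_mul _ _ _).symm
    _ ≤ r * ‖v‖ := mul_le_mul_of_nonneg_right (hs i) (norm_nonneg v)

lemma pow_nonneg_rowsum {n : Type*} [Fintype n] [DecidableEq n] (M : Matrix n n ℝ) (r : ℝ)
    (h0 : ∀ i j, 0 ≤ M i j) (hs : ∀ i, ∑ j, M i j = r) :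
    ∀ k, (∀ i j, 0 ≤ (M ^ k) i j) ∧ (∀ i, ∑ j, (M ^ k) i j = r ^ k) := by
  intro k
  induction k with
  | zero =>
    constructor
    · intro i j; simp [Matrix.one_apply]; positivity
    · intro i; simp [Matrix.one_apply]
  | succ k ih =>
    have hmul : M ^ (k+1) = M * M ^ k := by rw [pow_succ']
    constructor
    · intro i j
      rw [hmul]
      exact Finset.sum_nonneg fun l _ => mul_nonneg (h0 i l) (ih.1 l j)
    · intro i
      rw [hmul]
      calc ∑ j, (M * M ^ k) i j = ∑ j, ∑ l, M i l * (M ^ k) l j := by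
            simp [Matrix.mul_apply]
        _ = ∑ l, M i l * ∑ j, (M ^ k) l j := by
            rw [Finset.sum_comm]
            exact Finset.sum_congr rfl fun l _ => (Finset.mul_sum _ _ _).symm
        _ = ∑ l, M i l * r ^ k := by simp [ih.2]
        _ = r ^ (k+1) := by rw [← Finset.sum_mul, hs i, pow_succ']

lemma neumann {n : Type*} [Fintype n] [DecidableEq n] (M : Matrix n n ℝ) (r : ℝ)
    (hr0 : 0 ≤ r) (hr1 : r < 1)
    (h0 : ∀ i j, 0 ≤ M i j) (hs : ∀ i, ∑ j, M i j = r) :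
    IsUnit (1 - M).det ∧ HasSum (fun k : ℕ => M ^ k) (1 - M)⁻¹ := by
  have hb : ∀ k i j, (M ^ k) i j ≤ r ^ k := by
    intro k i j
    have h := pow_nonneg_rowsum M r h0 hs k
    calc (M ^ k) i j ≤ ∑ l, (M ^ k) i l :=
          Finset.single_le_sum (fun l _ => h.1 i l) (Finset.mem_univ j)
      _ = r ^ k := h.2 i
  have hsum : ∀ i j, Summable (fun k : ℕ => (M ^ k) i j) := by
    intro i j
    exact Summable.of_nonneg_of_le (fun k => (pow_nonneg_rowsum M r h0 hs k).1 i j)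
      (fun k => hb k i j) (summable_geometric_of_lt_one hr0 hr1)
  set S : Matrix n n ℝ := Matrix.of fun i j => ∑' k, (M ^ k) i j with hS
  have hHS : HasSum (fun k : ℕ => M ^ k) S := by
    refine Pi.hasSum.2 ?_
    intro i
    rw [Pi.hasSum]
    intro j
    exact (hsum i j).hasSum
  -- M * S entries
  have hMS : ∀ i j, (M * S) i j = ∑' k, (M ^ (k+1)) i j := by
    intro i j
    have : HasSum (fun k : ℕ => ∑ l, M i l * (M ^ k) l j) (∑ l, M i l * S l j) := by
      apply hasSum_sum
      intro l _
      exact ((hsum l j).hasSum.mul_left (M i l))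
    have h2 : (fun k : ℕ => ∑ l, M i l * (M ^ k) l j) = fun k => (M ^ (k+1)) i j := by
      funext k
      rw [pow_succ', Matrix.mul_apply]
    rw [h2] at this
    rw [Matrix.mul_apply]
    exact this.tsum_eq.symm
  have hone : (1 - M) * S = 1 := by
    ext i j
    have hshift := ((hsum i j).hasSum.tsum_eq)
    have : ∑' k, (M ^ k) i j = (M ^ 0) i j + ∑' k, (M ^ (k+1)) i j := by
      exact (Summable.tsum_eq_zero_add (hsum i j)).trans rfl
    rw [Matrix.sub_mul, Matrix.one_mul, Matrix.sub_apply, hMS i j]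
    have hSij : S i j = ∑' k, (M ^ k) i j := rfl
    rw [hSij, this]
    simp [Matrix.one_apply]
  have hu : IsUnit (1 - M).det := Matrix.isUnit_det_of_right_inverse hone
  have hinv : (1 - M)⁻¹ = S := Matrix.inv_eq_right_inv hone
  exact ⟨hu, hinv ▸ hHS⟩

variable {φ : ℝ → ℝ}

lemma bdd_integrableOn {E : Type*} [NormedAddCommGroup E] {f : ℝ → E} {σ₁ σ₂ C : ℝ}
    (hm : AEStronglyMeasurable f (volume.restrict (Set.Ioc σ₁ σ₂)))
    (hb : ∀ s ∈ Set.Ioc σ₁ σ₂, ‖f s‖ ≤ C) :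
    IntegrableOn f (Set.Ioc σ₁ σ₂) := by
  refine Integrable.mono' (integrable_const C) hm ?_
  exact (ae_restrict_iff' measurableSet_Ioc).2 (ae_of_all _ hb)

lemma conv_integrable (Cφ : ℝ) (hφm : Measurable φ)
    (hφ0 : ∀ u, 0 ≤ u → 0 ≤ φ u) (hφb : ∀ u, 0 ≤ u → φ u ≤ Cφ)
    (w : ℝ → Fin 4 → ℝ) (hw : Measurable w) (K σ₁ σ₂ t : ℝ)
    (h1 : 0 ≤ σ₁) (h2 : σ₁ ≤ σ₂) (h3 : σ₂ ≤ t)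
    (hK : ∀ s ∈ Set.Icc σ₁ σ₂, ‖w s‖ ≤ K) :
    IntervalIntegrable (fun s => φ (t - s) • w s) volume σ₁ σ₂ := by
  rw [intervalIntegrable_iff_integrableOn_Ioc_of_le h2]
  refine bdd_integrableOn (C := Cφ * K) ((hφm.comp (measurable_const.sub measurable_id)).smul hw).aestronglyMeasurable.restrict ?_
  intro s hs
  have hts : 0 ≤ t - s := by linarith [hs.2]
  rw [norm_smul, Real.norm_eq_abs, abs_of_nonneg (hφ0 _ hts)]
  have hK0 : 0 ≤ K := le_trans (norm_nonneg _) (hK σ₁ ⟨le_refl _, h2⟩)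
  exact mul_le_mul (hφb _ hts) (hK s ⟨le_of_lt hs.1, hs.2⟩) (norm_nonneg _) (le_trans (hφ0 _ hts) (hφb _ hts))

lemma phi_shift_integrable (Cφ : ℝ) (hφm : Measurable φ)
    (hφ0 : ∀ u, 0 ≤ u → 0 ≤ φ u) (hφb : ∀ u, 0 ≤ u → φ u ≤ Cφ)
    {σ₁ σ₂ t : ℝ} (h2 : σ₁ ≤ σ₂) (h3 : σ₂ ≤ t) :
    IntervalIntegrable (fun s => φ (t - s)) volume σ₁ σ₂ := by
  rw [intervalIntegrable_iff_integrableOn_Ioc_of_le h2]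
  refine bdd_integrableOn (C := Cφ) (hφm.comp (measurable_const.sub measurable_id)).aestronglyMeasurable.restrict ?_
  intro s hs
  have hts : 0 ≤ t - s := by linarith [hs.2]
  rw [Real.norm_eq_abs, abs_of_nonneg (hφ0 _ hts)]
  exact hφb _ hts

lemma conv_norm_le (Cφ : ℝ) (hφm : Measurable φ)
    (hφ0 : ∀ u, 0 ≤ u → 0 ≤ φ u) (hφb : ∀ u, 0 ≤ u → φ u ≤ Cφ)
    (w : ℝ → Fin 4 → ℝ) (hw : Measurable w) (K σ₁ σ₂ t : ℝ)
    (h1 : 0 ≤ σ₁) (h2 : σ₁ ≤ σ₂) (h3 : σ₂ ≤ t)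
    (hK : ∀ s ∈ Set.Icc σ₁ σ₂, ‖w s‖ ≤ K) :
    ‖∫ s in σ₁..σ₂, φ (t - s) • w s‖ ≤ K * ∫ u in (t - σ₂)..(t - σ₁), φ u := by
  have hK0 : 0 ≤ K := le_trans (norm_nonneg _) (hK σ₁ ⟨le_refl _, h2⟩)
  have hg : IntervalIntegrable (fun s => K * φ (t - s)) volume σ₁ σ₂ :=
    ((phi_shift_integrable Cφ hφm hφ0 hφb h2 h3).const_mul K)
  have hb : ∀ᵐ s ∂(volume.restrict (Set.uIoc σ₁ σ₂)), ‖φ (t - s) • w s‖ ≤ K * φ (t - s) := by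
    rw [Set.uIoc_of_le h2]
    refine (ae_restrict_iff' measurableSet_Ioc).2 (ae_of_all _ ?_)
    intro s hs
    have hts : 0 ≤ t - s := by linarith [hs.2]
    rw [norm_smul, Real.norm_eq_abs, abs_of_nonneg (hφ0 _ hts), mul_comm]
    exact mul_le_mul (hK s ⟨le_of_lt hs.1, hs.2⟩) (le_refl _) (hφ0 _ hts) hK0
  calc ‖∫ s in σ₁..σ₂, φ (t - s) • w s‖ ≤ |∫ s in σ₁..σ₂, K * φ (t - s)| :=
        intervalIntegral.norm_integral_le_abs_of_norm_le hb hg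
    _ = K * ∫ s in σ₁..σ₂, φ (t - s) := by
        rw [intervalIntegral.integral_const_mul, abs_of_nonneg]
        refine mul_nonneg hK0 ?_
        refine intervalIntegral.integral_nonneg h2 ?_
        intro u hu
        exact hφ0 _ (by linarith [hu.2])
    _ = K * ∫ u in (t - σ₂)..(t - σ₁), φ u := by
        rw [intervalIntegral.integral_comp_sub_left φ t]

lemma interval_le_tail (hint : IntegrableOn φ (Set.Ioi 0))
    (hφ0 : ∀ u, 0 ≤ u → 0 ≤ φ u) {α β : ℝ} (hα : 0 ≤ α) (hαβ : α ≤ β) :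
    ∫ u in α..β, φ u ≤ ∫ u in Set.Ioi α, φ u := by
  rw [intervalIntegral.integral_of_le hαβ]
  refine setIntegral_mono_set (hint.mono_set (Set.Ioi_subset_Ioi hα)) ?_ ?_
  · refine (ae_restrict_iff' measurableSet_Ioi).2 (ae_of_all _ ?_)
    intro u hu
    exact hφ0 u (le_of_lt (lt_of_le_of_lt hα hu))
  · exact HasSubset.Subset.eventuallyLE Set.Ioc_subset_Ioi_self

lemma tail_tendsto (hφm : Measurable φ) (hint : IntegrableOn φ (Set.Ioi 0)) :
    Tendsto (fun T => ∫ u in Set.Ioi T, φ u) atTop (𝓝 0) := by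
  have h1 := intervalIntegral_tendsto_integral_Ioi 0 hint tendsto_id
  have h2 : Tendsto (fun T => (∫ u in Set.Ioi (0:ℝ), φ u) - ∫ u in (0:ℝ)..T, φ u)
      atTop (𝓝 ((∫ u in Set.Ioi (0:ℝ), φ u) - ∫ u in Set.Ioi (0:ℝ), φ u)) :=
    tendsto_const_nhds.sub h1
  rw [sub_self] at h2
  refine h2.congr' ?_
  filter_upwards [eventually_ge_atTop (0:ℝ)] with T hT
  have hsplit : ∫ u in Set.Ioi (0:ℝ), φ u
      = (∫ u in Set.Ioc (0:ℝ) T, φ u) + ∫ u in Set.Ioi T, φ u := by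
    rw [← setIntegral_union]
    · rw [Set.Ioc_union_Ioi_eq_Ioi hT]
    · exact Set.Ioc_disjoint_Ioi (le_refl T)
    · exact measurableSet_Ioi
    · exact hint.mono_set (fun x hx => hx.1)
    · exact hint.mono_set (Set.Ioi_subset_Ioi hT)
  rw [intervalIntegral.integral_of_le hT, hsplit]
  ring

lemma measurable_mulVec (N : Matrix (Fin 4) (Fin 4) ℝ) {w : ℝ → Fin 4 → ℝ}
    (hw : Measurable w) : Measurable (fun s => N.mulVec (w s)) := by
  apply measurable_pi_lambda
  intro i
  simp only [Matrix.mulVec, dotProduct]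
  exact Finset.measurable_sum _ fun j _ =>
    (measurable_const.mul ((measurable_pi_apply j).comp hw))
/-- With `λ₁ = β₁+2β₂+β₂β₃` the largest eigenvalue of `Φ₀` and `c = 1/λ₁`
(the critical unstable condition is `‖φ‖₁ = c`), for every `a ∈ (0,1)`:
`I − a c Φ₀` is invertible, the Neumann series `Σ (a c)^k Φ₀^k` converges to
`(I − a c Φ₀)⁻¹`, and every locally bounded measurable solution of the vector
Volterra equation `Λ(t) = μ(t) + a ∫₀ᵗ φ(t−s) Φ₀ Λ(s) ds` tends to
`(I − a c Φ₀)⁻¹ μ(∞)` as `t → ∞`. -/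
theorem matrix_neumann_and_vector_volterra_limit
    (β₁ β₂ β₃ : ℝ)
    (h₂₁ : 0 < β₂) (h₁ : β₂ < β₁) (h₁lt : β₁ < 1)
    (h₃pos : 0 < β₃) (h₃lt : β₃ < 1)
    (hlt : β₁ + β₂ * β₃ < 1) (hgt : 1 < β₁ + β₂ + β₂ * β₃) :
    ∀ a : ℝ, a ∈ Set.Ioo (0 : ℝ) 1 →
      IsUnit ((1 : Matrix (Fin 4) (Fin 4) ℝ) -
        (a * (1 / (β₁ + 2 * β₂ + β₂ * β₃))) • Phi0 β₁ β₂ β₃).det ∧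
      HasSum
        (fun k : ℕ => (a * (1 / (β₁ + 2 * β₂ + β₂ * β₃))) ^ k • (Phi0 β₁ β₂ β₃) ^ k)
        (((1 : Matrix (Fin 4) (Fin 4) ℝ) -
          (a * (1 / (β₁ + 2 * β₂ + β₂ * β₃))) • Phi0 β₁ β₂ β₃)⁻¹) ∧
      ∀ (φ : ℝ → ℝ) (μ : ℝ → Fin 4 → ℝ) (μinf : Fin 4 → ℝ) (Λ : ℝ → Fin 4 → ℝ),
        Measurable φ → (∀ t : ℝ, 0 ≤ t → 0 ≤ φ t) →
        (∃ C : ℝ, ∀ t : ℝ, 0 ≤ t → φ t ≤ C) →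
        IntegrableOn φ (Set.Ioi 0) →
        (∫ t in Set.Ioi (0 : ℝ), φ t) = 1 / (β₁ + 2 * β₂ + β₂ * β₃) →
        Measurable μ → (∃ C : ℝ, ∀ t : ℝ, 0 ≤ t → ‖μ t‖ ≤ C) →
        Tendsto μ atTop (nhds μinf) →
        Measurable Λ →
        (∀ T : ℝ, ∃ C : ℝ, ∀ t ∈ Set.Icc (0 : ℝ) T, ‖Λ t‖ ≤ C) →
        (∀ t : ℝ, 0 ≤ t →
          Λ t = μ t + a • ∫ s in (0 : ℝ)..t, φ (t - s) • (Phi0 β₁ β₂ β₃).mulVec (Λ s)) →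
        Tendsto Λ atTop
          (nhds ((((1 : Matrix (Fin 4) (Fin 4) ℝ) -
            (a * (1 / (β₁ + 2 * β₂ + β₂ * β₃))) • Phi0 β₁ β₂ β₃)⁻¹).mulVec μinf)) := by
  intro a ha
  obtain ⟨ha0, ha1⟩ := ha
  set lam : ℝ := β₁ + 2 * β₂ + β₂ * β₃ with hlam_def
  have hlam1 : 1 < lam := by rw [hlam_def]; linarith
  have hlam0 : 0 < lam := lt_trans one_pos hlam1
  set c : ℝ := 1 / lam with hc_def
  have hc0 : 0 < c := by positivity
  have hclam : c * lam = 1 := by rw [hc_def]; field_simp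
  set x : Matrix (Fin 4) (Fin 4) ℝ := (a * c) • Phi0 β₁ β₂ β₃ with hx_def
  have hΦ0 : ∀ i j, 0 ≤ Phi0 β₁ β₂ β₃ i j := Phi0_nonneg h₂₁ h₁ h₃pos hgt
  have hΦs : ∀ i, ∑ j, Phi0 β₁ β₂ β₃ i j = lam := Phi0_rowsum
  have hx0 : ∀ i j, 0 ≤ x i j := by
    intro i j
    simp only [hx_def, Matrix.smul_apply, smul_eq_mul]
    exact mul_nonneg (mul_nonneg (le_of_lt ha0) (le_of_lt hc0)) (hΦ0 i j)
  have hxs : ∀ i, ∑ j, x i j = a := by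
    intro i
    simp only [hx_def, Matrix.smul_apply, smul_eq_mul, ← Finset.mul_sum, hΦs i]
    rw [mul_assoc, hclam, mul_one]
  have hNeu := neumann x a (le_of_lt ha0) ha1 hx0 hxs
  have hxpow : ∀ k : ℕ, x ^ k = (a * c) ^ k • (Phi0 β₁ β₂ β₃) ^ k := by
    intro k; rw [hx_def, smul_pow]
  refine ⟨hNeu.1, ?_, ?_⟩
  · exact (funext hxpow : (fun k : ℕ => x ^ k) = _) ▸ hNeu.2
  intro φ μ μinf Λ hφm hφ0 hφbE hφint hφtot hμm hμbE hμlim hΛm hΛloc hEq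
  obtain ⟨Cφ, hφb⟩ := hφbE
  obtain ⟨Cμ, hμb⟩ := hμbE
  set A : Matrix (Fin 4) (Fin 4) ℝ := 1 - x with hA_def
  set ℓ : Fin 4 → ℝ := A⁻¹.mulVec μinf with hℓ_def
  have hmulVec_norm : ∀ v : Fin 4 → ℝ, ‖(Phi0 β₁ β₂ β₃).mulVec v‖ ≤ lam * ‖v‖ :=
    fun v => norm_mulVec_le _ lam (le_of_lt hlam0) hΦ0 (fun i => le_of_eq (hΦs i)) v
  have hAℓ : A.mulVec ℓ = μinf := by
    rw [hℓ_def, Matrix.mulVec_mulVec, Matrix.mul_nonsing_inv A hNeu.1, Matrix.one_mulVec]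
  have hℓfix : ℓ = μinf + (a * c) • (Phi0 β₁ β₂ β₃).mulVec ℓ := by
    have h1 : A.mulVec ℓ = ℓ - (a * c) • (Phi0 β₁ β₂ β₃).mulVec ℓ := by
      rw [hA_def, Matrix.sub_mulVec, Matrix.one_mulVec, hx_def, Matrix.smul_mulVec]
    rw [h1] at hAℓ
    rw [← hAℓ]
    abel
  have hCφ0 : 0 ≤ Cφ := le_trans (hφ0 0 le_rfl) (hφb 0 le_rfl)
  have hCμ0 : 0 ≤ Cμ := le_trans (norm_nonneg _) (hμb 0 le_rfl)
  have h1a : 0 < 1 - a := by linarith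
  have hglob : ∀ t, 0 ≤ t → ‖Λ t‖ ≤ Cμ / (1 - a) := by
    intro t ht
    obtain ⟨C, hC⟩ := hΛloc t
    set Mt : ℝ := sSup ((fun s => ‖Λ s‖) '' Set.Icc 0 t) with hMt_def
    have hne : ((fun s => ‖Λ s‖) '' Set.Icc 0 t).Nonempty :=
      ⟨‖Λ 0‖, ⟨0, ⟨le_rfl, ht⟩, rfl⟩⟩
    have hbdd : BddAbove ((fun s => ‖Λ s‖) '' Set.Icc 0 t) := by
      refine ⟨C, ?_⟩
      rintro y ⟨s, hs, rfl⟩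
      exact hC s hs
    have hMt : ∀ s ∈ Set.Icc (0:ℝ) t, ‖Λ s‖ ≤ Mt := fun s hs => le_csSup hbdd ⟨s, hs, rfl⟩
    have hMt0 : 0 ≤ Mt := le_trans (norm_nonneg (Λ 0)) (hMt 0 ⟨le_rfl, ht⟩)
    have key : ∀ s ∈ Set.Icc (0:ℝ) t, ‖Λ s‖ ≤ Cμ + a * Mt := by
      intro s hs
      rw [hEq s hs.1]
      have hIb : ‖∫ u in (0:ℝ)..s, φ (s - u) • (Phi0 β₁ β₂ β₃).mulVec (Λ u)‖
          ≤ (lam * Mt) * ∫ u in (s - s)..(s - 0), φ u := by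
        refine conv_norm_le Cφ hφm hφ0 hφb _ (measurable_mulVec _ hΛm) (lam * Mt) 0 s s
          le_rfl hs.1 le_rfl ?_
        intro u hu
        exact le_trans (hmulVec_norm (Λ u))
          (mul_le_mul_of_nonneg_left (hMt u ⟨hu.1, le_trans hu.2 hs.2⟩) (le_of_lt hlam0))
      have hIb2 : (∫ u in (s - s)..(s - 0), φ u) ≤ c := by
        rw [sub_self, sub_zero]
        calc ∫ u in (0:ℝ)..s, φ u ≤ ∫ u in Set.Ioi (0:ℝ), φ u :=
              interval_le_tail hφint hφ0 le_rfl hs.1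
          _ = c := hφtot
      have hlmc : lam * Mt * c = Mt := by
        calc lam * Mt * c = Mt * (c * lam) := by ring
          _ = Mt := by rw [hclam, mul_one]
      calc ‖μ s + a • ∫ u in (0:ℝ)..s, φ (s - u) • (Phi0 β₁ β₂ β₃).mulVec (Λ u)‖
          ≤ ‖μ s‖ + ‖a • ∫ u in (0:ℝ)..s, φ (s - u) • (Phi0 β₁ β₂ β₃).mulVec (Λ u)‖ :=
            norm_add_le _ _
        _ ≤ Cμ + a * (lam * Mt * c) := by
            refine add_le_add (hμb s hs.1) ?_
            rw [norm_smul, Real.norm_eq_abs, abs_of_pos ha0]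
            refine mul_le_mul_of_nonneg_left ?_ (le_of_lt ha0)
            exact le_trans hIb (mul_le_mul_of_nonneg_left hIb2 (by positivity))
        _ = Cμ + a * Mt := by rw [hlmc]
    have hMtle : Mt ≤ Cμ + a * Mt := by
      refine csSup_le hne ?_
      rintro y ⟨s, hs, rfl⟩
      exact key s hs
    have hMtfin : Mt ≤ Cμ / (1 - a) := by
      rw [le_div_iff₀ h1a]
      nlinarith
    exact le_trans (hMt t ⟨ht, le_rfl⟩) hMtfin
  set M' : ℝ := Cμ / (1 - a) + ‖ℓ‖ with hM'_def
  have hM'0 : 0 ≤ M' := by positivity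
  have hDm : Measurable (fun s => Λ s - ℓ) := hΛm.sub measurable_const
  have hDb : ∀ s, 0 ≤ s → ‖Λ s - ℓ‖ ≤ M' := by
    intro s hs
    calc ‖Λ s - ℓ‖ ≤ ‖Λ s‖ + ‖ℓ‖ := norm_sub_le _ _
      _ ≤ M' := by rw [hM'_def]; exact add_le_add_left (hglob s hs) _
  have hDeq : ∀ t, 0 ≤ t → Λ t - ℓ = (μ t - μinf)
      + a • (∫ s in (0:ℝ)..t, φ (t - s) • (Phi0 β₁ β₂ β₃).mulVec (Λ s - ℓ))
      + ((a * ∫ s in (0:ℝ)..t, φ (t - s)) - a * c) • (Phi0 β₁ β₂ β₃).mulVec ℓ := by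
    intro t ht
    have hint1 : IntervalIntegrable
        (fun s => φ (t - s) • (Phi0 β₁ β₂ β₃).mulVec (Λ s - ℓ)) volume 0 t :=
      conv_integrable Cφ hφm hφ0 hφb _ (measurable_mulVec _ hDm) (lam * M') 0 t t
        le_rfl ht le_rfl
        (fun s hs => le_trans (hmulVec_norm _)
          (mul_le_mul_of_nonneg_left (hDb s hs.1) (le_of_lt hlam0)))
    have hint2 : IntervalIntegrable
        (fun s => φ (t - s) • (Phi0 β₁ β₂ β₃).mulVec ℓ) volume 0 t :=
      conv_integrable Cφ hφm hφ0 hφb _ measurable_const ‖(Phi0 β₁ β₂ β₃).mulVec ℓ‖ 0 t t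
        le_rfl ht le_rfl (fun s _ => le_rfl)
    have hsplit : (∫ s in (0:ℝ)..t, φ (t - s) • (Phi0 β₁ β₂ β₃).mulVec (Λ s))
        = (∫ s in (0:ℝ)..t, φ (t - s) • (Phi0 β₁ β₂ β₃).mulVec (Λ s - ℓ))
          + (∫ s in (0:ℝ)..t, φ (t - s)) • (Phi0 β₁ β₂ β₃).mulVec ℓ := by
      rw [← intervalIntegral.integral_smul_const,
        ← intervalIntegral.integral_add hint1 hint2]
      congr 1
      funext s
      rw [Matrix.mulVec_sub, smul_sub]
      abel
    rw [hEq t ht, hsplit]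
    set q : Fin 4 → ℝ := (Phi0 β₁ β₂ β₃).mulVec ℓ with hq_def
    set ID : Fin 4 → ℝ := ∫ s in (0:ℝ)..t, φ (t - s) • (Phi0 β₁ β₂ β₃).mulVec (Λ s - ℓ)
      with hID_def
    set J : ℝ := ∫ s in (0:ℝ)..t, φ (t - s) with hJ_def
    rw [hℓfix]
    rw [smul_add, smul_smul, sub_smul]
    abel
  set g : ℝ → ℝ := fun t => ‖Λ t - ℓ‖ with hg_def
  have hgbd : ∀ᶠ t in atTop, g t ≤ M' := by
    filter_upwards [eventually_ge_atTop (0:ℝ)] with t ht using hDb t ht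
  have hBddA : IsBoundedUnder (· ≤ ·) atTop g := ⟨M', eventually_map.2 hgbd⟩
  have hBddB : IsBoundedUnder (· ≥ ·) atTop g :=
    ⟨0, eventually_map.2 (Eventually.of_forall fun t => norm_nonneg _)⟩
  set L : ℝ := limsup g atTop with hL_def
  have hL0 : 0 ≤ L :=
    le_limsup_of_frequently_le
      ((Eventually.of_forall fun t => norm_nonneg (Λ t - ℓ)).frequently) hBddA
  have hliminf : (0:ℝ) ≤ liminf g atTop :=
    le_liminf_of_le hBddA.isCoboundedUnder_ge
      (Eventually.of_forall fun t => norm_nonneg _)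
  have hkey : ∀ ε : ℝ, 0 < ε → L ≤ a * L + (3 + a) * ε := by
    intro ε hε
    obtain ⟨T₀', hT₀'⟩ := eventually_atTop.1
      (eventually_lt_of_limsup_lt (by linarith : limsup g atTop < L + ε) hBddA)
    set T₀ : ℝ := max T₀' 0 with hT₀_def
    have hT₀0 : 0 ≤ T₀ := le_max_right _ _
    have hT₀g : ∀ s, T₀ ≤ s → g s ≤ L + ε :=
      fun s hs => le_of_lt (hT₀' s (le_trans (le_max_left _ _) hs))
    have hE1 : ∀ᶠ t in atTop, ‖μ t - μinf‖ ≤ ε := by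
      have h0 := tendsto_iff_norm_sub_tendsto_zero.1 hμlim
      exact (h0.eventually_lt_const hε).mono fun t h => le_of_lt h
    have hsubT : Tendsto (fun t : ℝ => t - T₀) atTop atTop :=
      (tendsto_atTop_add_const_right atTop (-T₀) tendsto_id).congr
        (fun t => (sub_eq_add_neg t T₀).symm)
    have htail : Tendsto (fun t : ℝ => ∫ u in Set.Ioi (t - T₀), φ u) atTop (𝓝 0) :=
      (tail_tendsto hφm hφint).comp hsubT
    have hE2 : ∀ᶠ t in atTop, (a * (lam * M')) * ∫ u in Set.Ioi (t - T₀), φ u ≤ ε := by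
      have h2 : Tendsto (fun t : ℝ => (a * (lam * M')) * ∫ u in Set.Ioi (t - T₀), φ u)
          atTop (𝓝 ((a * (lam * M')) * 0)) := htail.const_mul _
      rw [mul_zero] at h2
      exact (h2.eventually_lt_const hε).mono fun t h => le_of_lt h
    have hJc : Tendsto (fun t : ℝ => ∫ s in (0:ℝ)..t, φ (t - s)) atTop (𝓝 c) := by
      have h1 : Tendsto (fun t : ℝ => ∫ u in (0:ℝ)..t, φ u) atTop (𝓝 c) := by
        have h2 := intervalIntegral_tendsto_integral_Ioi 0 hφint tendsto_id
        rwa [hφtot] at h2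
      refine h1.congr fun t => ?_
      rw [intervalIntegral.integral_comp_sub_left φ t, sub_self, sub_zero]
    have hE3 : ∀ᶠ t in atTop,
        |a * (∫ s in (0:ℝ)..t, φ (t - s)) - a * c| * (lam * ‖ℓ‖) ≤ ε := by
      have h2 : Tendsto
          (fun t : ℝ => |a * (∫ s in (0:ℝ)..t, φ (t - s)) - a * c| * (lam * ‖ℓ‖))
          atTop (𝓝 (|a * c - a * c| * (lam * ‖ℓ‖))) :=
        ((hJc.const_mul a).sub_const (a * c)).abs.mul_const _
      rw [sub_self, abs_zero, zero_mul] at h2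
      exact (h2.eventually_lt_const hε).mono fun t h => le_of_lt h
    have hmain : ∀ᶠ t in atTop, g t ≤ a * L + (3 + a) * ε := by
      filter_upwards [hE1, hE2, hE3, eventually_ge_atTop T₀] with t h1 h2 h3 ht
      have ht0 : 0 ≤ t := le_trans hT₀0 ht
      have hint1 : IntervalIntegrable
          (fun s => φ (t - s) • (Phi0 β₁ β₂ β₃).mulVec (Λ s - ℓ)) volume 0 T₀ :=
        conv_integrable Cφ hφm hφ0 hφb _ (measurable_mulVec _ hDm) (lam * M') 0 T₀ t
          le_rfl hT₀0 ht
          (fun s hs => le_trans (hmulVec_norm _)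
            (mul_le_mul_of_nonneg_left (hDb s hs.1) (le_of_lt hlam0)))
      have hint2 : IntervalIntegrable
          (fun s => φ (t - s) • (Phi0 β₁ β₂ β₃).mulVec (Λ s - ℓ)) volume T₀ t :=
        conv_integrable Cφ hφm hφ0 hφb _ (measurable_mulVec _ hDm) (lam * M') T₀ t t
          hT₀0 ht le_rfl
          (fun s hs => le_trans (hmulVec_norm _)
            (mul_le_mul_of_nonneg_left (hDb s (le_trans hT₀0 hs.1)) (le_of_lt hlam0)))
      have hsplit2 : (∫ s in (0:ℝ)..t, φ (t - s) • (Phi0 β₁ β₂ β₃).mulVec (Λ s - ℓ))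
          = (∫ s in (0:ℝ)..T₀, φ (t - s) • (Phi0 β₁ β₂ β₃).mulVec (Λ s - ℓ))
            + ∫ s in T₀..t, φ (t - s) • (Phi0 β₁ β₂ β₃).mulVec (Λ s - ℓ) :=
        (intervalIntegral.integral_add_adjacent_intervals hint1 hint2).symm
      have hb1 : ‖∫ s in (0:ℝ)..T₀, φ (t - s) • (Phi0 β₁ β₂ β₃).mulVec (Λ s - ℓ)‖
          ≤ (lam * M') * ∫ u in Set.Ioi (t - T₀), φ u := by
        have hc1 := conv_norm_le Cφ hφm hφ0 hφb _ (measurable_mulVec _ hDm) (lam * M')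
          0 T₀ t le_rfl hT₀0 ht
          (fun s hs => le_trans (hmulVec_norm _)
            (mul_le_mul_of_nonneg_left (hDb s hs.1) (le_of_lt hlam0)))
        refine le_trans hc1 (mul_le_mul_of_nonneg_left ?_ (by positivity))
        rw [sub_zero]
        exact interval_le_tail hφint hφ0 (by linarith) (by linarith)
      have hLε0 : 0 ≤ L + ε := by linarith
      have hb2 : ‖∫ s in T₀..t, φ (t - s) • (Phi0 β₁ β₂ β₃).mulVec (Λ s - ℓ)‖
          ≤ lam * (L + ε) * c := by
        have hc2 := conv_norm_le Cφ hφm hφ0 hφb _ (measurable_mulVec _ hDm)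
          (lam * (L + ε)) T₀ t t hT₀0 ht le_rfl
          (fun s hs => le_trans (hmulVec_norm _)
            (mul_le_mul_of_nonneg_left (hT₀g s hs.1) (le_of_lt hlam0)))
        refine le_trans hc2 (mul_le_mul_of_nonneg_left ?_
          (mul_nonneg (le_of_lt hlam0) hLε0))
        rw [sub_self]
        calc ∫ u in (0:ℝ)..(t - T₀), φ u ≤ ∫ u in Set.Ioi (0:ℝ), φ u :=
              interval_le_tail hφint hφ0 le_rfl (by linarith)
          _ = c := hφtot
      have hlc : lam * (L + ε) * c = L + ε := by
        calc lam * (L + ε) * c = (L + ε) * (c * lam) := by ring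
          _ = L + ε := by rw [hclam, mul_one]
      have htri : g t ≤ ‖μ t - μinf‖
          + a * (‖∫ s in (0:ℝ)..T₀, φ (t - s) • (Phi0 β₁ β₂ β₃).mulVec (Λ s - ℓ)‖
            + ‖∫ s in T₀..t, φ (t - s) • (Phi0 β₁ β₂ β₃).mulVec (Λ s - ℓ)‖)
          + |a * (∫ s in (0:ℝ)..t, φ (t - s)) - a * c| * ‖(Phi0 β₁ β₂ β₃).mulVec ℓ‖ := by
        have heq := hDeq t ht0
        rw [hsplit2] at heq
        calc g t = ‖(μ t - μinf)
            + a • ((∫ s in (0:ℝ)..T₀, φ (t - s) • (Phi0 β₁ β₂ β₃).mulVec (Λ s - ℓ))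
              + ∫ s in T₀..t, φ (t - s) • (Phi0 β₁ β₂ β₃).mulVec (Λ s - ℓ))
            + ((a * ∫ s in (0:ℝ)..t, φ (t - s)) - a * c) • (Phi0 β₁ β₂ β₃).mulVec ℓ‖ := by
              rw [hg_def]; simp only []; rw [heq]
          _ ≤ ‖μ t - μinf‖
              + ‖a • ((∫ s in (0:ℝ)..T₀, φ (t - s) • (Phi0 β₁ β₂ β₃).mulVec (Λ s - ℓ))
                + ∫ s in T₀..t, φ (t - s) • (Phi0 β₁ β₂ β₃).mulVec (Λ s - ℓ))‖
              + ‖((a * ∫ s in (0:ℝ)..t, φ (t - s)) - a * c) • (Phi0 β₁ β₂ β₃).mulVec ℓ‖ :=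
            norm_add₃_le
          _ ≤ _ := by
              rw [norm_smul, norm_smul, Real.norm_eq_abs, Real.norm_eq_abs, abs_of_pos ha0]
              refine add_le_add (add_le_add_right ?_ _) le_rfl
              exact mul_le_mul_of_nonneg_left (norm_add_le _ _) (le_of_lt ha0)
      have hq : |a * (∫ s in (0:ℝ)..t, φ (t - s)) - a * c| * ‖(Phi0 β₁ β₂ β₃).mulVec ℓ‖ ≤ ε :=
        le_trans (mul_le_mul_of_nonneg_left (hmulVec_norm ℓ) (abs_nonneg _)) h3
      have hI1 : a * ‖∫ s in (0:ℝ)..T₀, φ (t - s) • (Phi0 β₁ β₂ β₃).mulVec (Λ s - ℓ)‖ ≤ ε := by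
        refine le_trans ?_ h2
        calc a * ‖∫ s in (0:ℝ)..T₀, φ (t - s) • (Phi0 β₁ β₂ β₃).mulVec (Λ s - ℓ)‖
            ≤ a * ((lam * M') * ∫ u in Set.Ioi (t - T₀), φ u) :=
              mul_le_mul_of_nonneg_left hb1 (le_of_lt ha0)
          _ = (a * (lam * M')) * ∫ u in Set.Ioi (t - T₀), φ u := by ring
      have hI2 : a * ‖∫ s in T₀..t, φ (t - s) • (Phi0 β₁ β₂ β₃).mulVec (Λ s - ℓ)‖
          ≤ a * (L + ε) := by
        refine mul_le_mul_of_nonneg_left ?_ (le_of_lt ha0)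
        rw [← hlc]
        exact hb2
      have hdist := mul_add a
        ‖∫ s in (0:ℝ)..T₀, φ (t - s) • (Phi0 β₁ β₂ β₃).mulVec (Λ s - ℓ)‖
        ‖∫ s in T₀..t, φ (t - s) • (Phi0 β₁ β₂ β₃).mulVec (Λ s - ℓ)‖
      linarith [htri, h1, hq, hI1, hI2, hdist]
    exact limsup_le_of_le hBddB.isCoboundedUnder_le hmain
  have hL_le : L ≤ 0 := by
    by_contra hcon
    push_neg at hcon
    have h3a : (0:ℝ) < 3 + a := by linarith
    have hε : 0 < (1 - a) * L / (2 * (3 + a)) := by positivity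
    have hk := hkey _ hε
    have hd : (3 + a) * ((1 - a) * L / (2 * (3 + a))) = (1 - a) * L / 2 := by
      field_simp
    rw [hd] at hk
    nlinarith
  have hgto : Tendsto g atTop (𝓝 0) :=
    tendsto_of_le_liminf_of_limsup_le hliminf hL_le hBddA hBddB
  exact tendsto_iff_norm_sub_tendsto_zero.2 hgto
end

section
/- Let φ : [0,∞) → [0,∞) be a bounded measurable integrable function with φ ∈ L²(0,∞), let λ > 0 satisfy λ ∫₀^∞ φ(t) dt < 1, and let (a_T)_{T∈ℕ} be a sequence in (0,1). Define ψ_T(t) = Σ_{k=1}^∞ (a_T λ)^k φ^{*k}(t). Then each ψ_T belongs to L²(0,∞) with sup_{T} ‖ψ_T‖_{L²(0,∞)} < ∞, and lim_{T→∞} ∫₀^∞ ψ_T(T s)² ds = 0. -/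
/-!
On `[0, ∞)` one has `0 ≤ φ^{*k} ≤ C ‖φ‖₁^(k-1)` by induction, and `‖φ^{*k}‖₁ = ‖φ‖₁^k` by
Tonelli. Hence for `c = a_T λ ≤ λ` and `r = λ ‖φ‖₁ < 1` the series `ψ_T` is bounded by
`λ C / (1 - r)` and has `L¹` norm at most `r / (1 - r)`, so `‖ψ_T‖₂² ≤ ‖ψ_T‖_∞ ‖ψ_T‖₁` is
bounded uniformly in `T`. The substitution `t = T s` gives `∫₀^∞ ψ_T(T s)² ds = T⁻¹ ‖ψ_T‖₂²`.
-/

open MeasureTheory Filter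

/-- Iterated convolution: `iterConv φ k = φ^{*(k+1)}`, where `φ^{*1} = φ` and
`φ^{*(k+1)}(t) = ∫₀ᵗ φ^{*k}(t−s) φ(s) ds`. -/
noncomputable def iterConv (φ : ℝ → ℝ) : ℕ → ℝ → ℝ
  | 0 => φ
  | (k + 1) => fun t => ∫ s in (0 : ℝ)..t, iterConv φ k (t - s) * φ s

open Set ENNReal

section General

variable {α E : Type*} [MeasurableSpace α] [NormedAddCommGroup E] {μ : Measure α}

theorem stronglyMeasurable_setIntegral_Ioc [NormedSpace ℝ E] {F : α → ℝ → E}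
    (hF : StronglyMeasurable (Function.uncurry F)) {a b : α → ℝ} (ha : Measurable a)
    (hb : Measurable b) :
    StronglyMeasurable fun x => ∫ s in Ioc (a x) (b x), F x s := by
  have hS : MeasurableSet {p : α × ℝ | p.2 ∈ Ioc (a p.1) (b p.1)} :=
    (measurableSet_lt (ha.comp measurable_fst) measurable_snd).inter
      (measurableSet_le measurable_snd (hb.comp measurable_fst))
  convert (hF.indicator hS).integral_prod_right' (ν := volume) using 2 with x
  rw [← integral_indicator measurableSet_Ioc]
  rfl

theorem stronglyMeasurable_intervalIntegral [NormedSpace ℝ E] {F : α → ℝ → E}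
    (hF : StronglyMeasurable (Function.uncurry F)) {a b : α → ℝ} (ha : Measurable a)
    (hb : Measurable b) :
    StronglyMeasurable fun x => ∫ s in a x..b x, F x s :=
  (stronglyMeasurable_setIntegral_Ioc hF ha hb).sub (stronglyMeasurable_setIntegral_Ioc hF hb ha)

theorem integrable_tsum_of_summable_integral_norm [CompleteSpace E] {F : ℕ → α → E}
    (hF_int : ∀ i, Integrable (F i) μ) (hF_sum : Summable fun i => ∫ a, ‖F i a‖ ∂μ) :
    Integrable (fun a => ∑' i, F i a) μ := by
  have hmeas : ∀ i, AEMeasurable (fun a => ‖F i a‖ₑ) μ := fun i => (hF_int i).1.enorm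
  have hfin : ∫⁻ a, ∑' i, ‖F i a‖ₑ ∂μ < ∞ := by
    rw [lintegral_tsum hmeas, ← funext fun i => ofReal_integral_norm_eq_lintegral_enorm (hF_int i),
      ← ENNReal.ofReal_tsum_of_nonneg (fun i => integral_nonneg fun a => norm_nonneg _) hF_sum]
    exact ofReal_lt_top
  have hsum : ∀ᵐ a ∂μ, Summable fun i => F i a := by
    filter_upwards [ae_lt_top' (AEMeasurable.tsum hmeas) hfin.ne] with a ha
    exact Summable.of_norm (NNReal.summable_coe.2 (ENNReal.tsum_coe_ne_top_iff_summable.1 ha.ne))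
  refine ⟨aestronglyMeasurable_of_tendsto_ae (atTop : Filter ℕ)
    (fun n => Finset.aestronglyMeasurable_sum (Finset.range n) fun i _ => (hF_int i).1)
    (hsum.mono fun a ha => ?_), ?_⟩
  · simpa only [Finset.sum_apply] using ha.hasSum.tendsto_sum_nat
  · exact (lintegral_mono fun a => enorm_tsum_le_tsum_enorm).trans_lt hfin

variable {f : α → ℝ} {M : ℝ}

theorem MeasureTheory.Integrable.sq_of_ae_abs_le (hf : Integrable f μ) (hM : ∀ᵐ x ∂μ, |f x| ≤ M) :
    Integrable (fun x => f x ^ 2) μ := by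
  simpa [sq] using hf.bdd_mul hf.1 hM

theorem integral_sq_le_mul_integral (hf : Integrable f μ) (h0 : 0 ≤ᵐ[μ] f)
    (hM : ∀ᵐ x ∂μ, f x ≤ M) : ∫ x, f x ^ 2 ∂μ ≤ M * ∫ x, f x ∂μ := by
  have habs : ∀ᵐ x ∂μ, |f x| ≤ M := by
    filter_upwards [h0, hM] with x h0x hMx
    rwa [abs_of_nonneg h0x]
  rw [← integral_const_mul]
  refine integral_mono_ae (hf.sq_of_ae_abs_le habs) (hf.const_mul M) ?_
  filter_upwards [h0, hM] with x h0x hMx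
  rw [sq]
  exact mul_le_mul_of_nonneg_right hMx h0x

end General

theorem setLIntegral_Ioi_setLIntegral_Ioc_sub_mul {f g : ℝ → ℝ≥0∞} (hf : Measurable f)
    (hg : Measurable g) :
    ∫⁻ t in Ioi 0, ∫⁻ s in Ioc 0 t, g (t - s) * f s =
      (∫⁻ u in Ioi 0, g u) * ∫⁻ s in Ioi 0, f s := by
  -- Extending `g` by zero to negative arguments turns the triangle `0 < s ≤ t` into the
  -- quadrant `(0, ∞)²`, where Tonelli applies.
  set G := (Ici (0 : ℝ)).indicator g
  have hG : Measurable G := hg.indicator measurableSet_Ici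
  have hcausal : ∀ t, ∫⁻ s in Ioc 0 t, g (t - s) * f s = ∫⁻ s in Ioi 0, G (t - s) * f s := by
    intro t
    rw [← Ioi_inter_Iic, inter_comm, ← setLIntegral_indicator measurableSet_Iic]
    refine lintegral_congr fun s => ?_
    by_cases hst : s ≤ t <;> simp [G, indicator, hst, sub_nonneg]
  have hshift : ∀ s ∈ Ioi (0 : ℝ), ∫⁻ t in Ioi 0, G (t - s) = ∫⁻ u in Ioi 0, g u := by
    intro s hs
    rw [setLIntegral_eq_of_support_subset, lintegral_sub_right_eq_self,
      lintegral_indicator measurableSet_Ici, setLIntegral_congr Ioi_ae_eq_Ici]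
    intro t ht
    have hst : 0 ≤ t - s := by
      by_contra h
      exact ht (indicator_of_notMem h g)
    exact lt_of_lt_of_le (mem_Ioi.1 hs) (by linarith)
  calc ∫⁻ t in Ioi 0, ∫⁻ s in Ioc 0 t, g (t - s) * f s
      = ∫⁻ t in Ioi 0, ∫⁻ s in Ioi 0, G (t - s) * f s := by simp_rw [hcausal]
    _ = ∫⁻ s in Ioi 0, ∫⁻ t in Ioi 0, G (t - s) * f s :=
        lintegral_lintegral_swap ((hG.comp (measurable_fst.sub measurable_snd)).mul
          (hf.comp measurable_snd)).aemeasurable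
    _ = ∫⁻ s in Ioi 0, (∫⁻ u in Ioi 0, g u) * f s := by
        refine setLIntegral_congr_fun measurableSet_Ioi fun s hs => ?_
        have hm : Measurable fun t => G (t - s) := hG.comp (measurable_sub_const s)
        rw [lintegral_mul_const _ hm, hshift s hs]
    _ = (∫⁻ u in Ioi 0, g u) * ∫⁻ s in Ioi 0, f s := lintegral_const_mul _ hf

section IterConv

variable {φ : ℝ → ℝ} {C t : ℝ}

theorem setIntegral_Ioi_zero_nonneg (hφ0 : ∀ t, 0 ≤ t → 0 ≤ φ t) : 0 ≤ ∫ s in Ioi 0, φ s :=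
  setIntegral_nonneg measurableSet_Ioi fun s hs => hφ0 s (le_of_lt hs)

theorem iterConv_zero : iterConv φ 0 = φ := rfl

theorem iterConv_succ_of_nonneg (k : ℕ) (ht : 0 ≤ t) :
    iterConv φ (k + 1) t = ∫ s in Ioc 0 t, iterConv φ k (t - s) * φ s :=
  intervalIntegral.integral_of_le ht

theorem measurable_iterConv (hφm : Measurable φ) : ∀ k, Measurable (iterConv φ k)
  | 0 => hφm
  | k + 1 =>
    (stronglyMeasurable_intervalIntegral (F := fun t s => iterConv φ k (t - s) * φ s)
      ((measurable_iterConv hφm k).comp (measurable_fst.sub measurable_snd) |>.mul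
        (hφm.comp measurable_snd)).stronglyMeasurable measurable_const measurable_id).measurable

theorem iterConv_nonneg (hφ0 : ∀ t, 0 ≤ t → 0 ≤ φ t) : ∀ k t, 0 ≤ t → 0 ≤ iterConv φ k t
  | 0 => hφ0
  | k + 1 => fun t ht => by
    rw [iterConv_succ_of_nonneg k ht]
    exact setIntegral_nonneg measurableSet_Ioc fun s hs =>
      mul_nonneg (iterConv_nonneg hφ0 k _ (sub_nonneg.2 hs.2)) (hφ0 s hs.1.le)

theorem ae_restrict_Ioi_iterConv_nonneg (hφ0 : ∀ t, 0 ≤ t → 0 ≤ φ t) (k : ℕ) :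
    0 ≤ᵐ[volume.restrict (Ioi 0)] iterConv φ k :=
  ae_restrict_of_forall_mem measurableSet_Ioi fun t ht => iterConv_nonneg hφ0 k t (le_of_lt ht)

theorem iterConv_le (hφ0 : ∀ t, 0 ≤ t → 0 ≤ φ t) (hφC : ∀ t, 0 ≤ t → φ t ≤ C)
    (hφi : IntegrableOn φ (Ioi 0)) :
    ∀ k t, 0 ≤ t → iterConv φ k t ≤ C * (∫ s in Ioi 0, φ s) ^ k
  | 0 => fun t ht => by rw [iterConv_zero, pow_zero, mul_one]; exact hφC t ht
  | k + 1 => fun t ht => by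
    set B := ∫ s in Ioi 0, φ s
    have hCB : 0 ≤ C * B ^ k := mul_nonneg ((hφ0 0 le_rfl).trans (hφC 0 le_rfl))
      (pow_nonneg (setIntegral_Ioi_zero_nonneg hφ0) k)
    calc iterConv φ (k + 1) t = ∫ s in Ioc 0 t, iterConv φ k (t - s) * φ s :=
          iterConv_succ_of_nonneg k ht
      _ ≤ ∫ s in Ioc 0 t, C * B ^ k * φ s := by
          refine integral_mono_of_nonneg ?_ ((hφi.mono_set Ioc_subset_Ioi_self).const_mul _) ?_
          · exact ae_restrict_of_forall_mem measurableSet_Ioc fun s hs =>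
              mul_nonneg (iterConv_nonneg hφ0 k _ (sub_nonneg.2 hs.2)) (hφ0 s hs.1.le)
          · exact ae_restrict_of_forall_mem measurableSet_Ioc fun s hs =>
              mul_le_mul_of_nonneg_right (iterConv_le hφ0 hφC hφi k _ (sub_nonneg.2 hs.2))
                (hφ0 s hs.1.le)
      _ = C * B ^ k * ∫ s in Ioc 0 t, φ s := integral_const_mul _ _
      _ ≤ C * B ^ k * B := by
          refine mul_le_mul_of_nonneg_left (setIntegral_mono_set hφi ?_
            Ioc_subset_Ioi_self.eventuallyLE) hCB
          exact ae_restrict_of_forall_mem measurableSet_Ioi fun s hs => hφ0 s (le_of_lt hs)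
      _ = C * B ^ (k + 1) := by ring

theorem integrableOn_iterConv_sub_mul (hφm : Measurable φ) (hφ0 : ∀ t, 0 ≤ t → 0 ≤ φ t)
    (hφC : ∀ t, 0 ≤ t → φ t ≤ C) (hφi : IntegrableOn φ (Ioi 0)) (k : ℕ) (t : ℝ) :
    IntegrableOn (fun s => iterConv φ k (t - s) * φ s) (Ioc 0 t) := by
  refine Integrable.mono' ((hφi.mono_set Ioc_subset_Ioi_self).const_mul
    (C * (∫ s in Ioi 0, φ s) ^ k)) ((measurable_iterConv hφm k).comp (measurable_const.sub
      measurable_id) |>.mul hφm).aestronglyMeasurable ?_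
  refine ae_restrict_of_forall_mem measurableSet_Ioc fun s hs => ?_
  have hk0 := iterConv_nonneg hφ0 k _ (sub_nonneg.2 hs.2)
  rw [Real.norm_of_nonneg (mul_nonneg hk0 (hφ0 s hs.1.le))]
  exact mul_le_mul_of_nonneg_right (iterConv_le hφ0 hφC hφi k _ (sub_nonneg.2 hs.2)) (hφ0 s hs.1.le)

theorem lintegral_ofReal_iterConv (hφm : Measurable φ) (hφ0 : ∀ t, 0 ≤ t → 0 ≤ φ t)
    (hφC : ∀ t, 0 ≤ t → φ t ≤ C) (hφi : IntegrableOn φ (Ioi 0)) :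
    ∀ k, ∫⁻ t in Ioi 0, ENNReal.ofReal (iterConv φ k t) =
      ENNReal.ofReal (∫ s in Ioi 0, φ s) ^ (k + 1)
  | 0 => by
    rw [zero_add, pow_one,
      ofReal_integral_eq_lintegral_ofReal hφi (ae_restrict_Ioi_iterConv_nonneg hφ0 0)]
    rfl
  | k + 1 => by
    have hconv : ∀ t ∈ Ioi (0 : ℝ), ENNReal.ofReal (iterConv φ (k + 1) t) =
        ∫⁻ s in Ioc 0 t, ENNReal.ofReal (iterConv φ k (t - s)) * ENNReal.ofReal (φ s) := by
      intro t ht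
      rw [iterConv_succ_of_nonneg k (le_of_lt ht), ofReal_integral_eq_lintegral_ofReal
        (integrableOn_iterConv_sub_mul hφm hφ0 hφC hφi k t)]
      · exact setLIntegral_congr_fun measurableSet_Ioc fun s hs =>
          ENNReal.ofReal_mul (iterConv_nonneg hφ0 k _ (sub_nonneg.2 hs.2))
      · exact ae_restrict_of_forall_mem measurableSet_Ioc fun s hs =>
          mul_nonneg (iterConv_nonneg hφ0 k _ (sub_nonneg.2 hs.2)) (hφ0 s hs.1.le)
    rw [setLIntegral_congr_fun measurableSet_Ioi hconv,
      setLIntegral_Ioi_setLIntegral_Ioc_sub_mul hφm.ennreal_ofReal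
        (measurable_iterConv hφm k).ennreal_ofReal,
      lintegral_ofReal_iterConv hφm hφ0 hφC hφi k, pow_succ]
    exact congrArg _ ((lintegral_ofReal_iterConv hφm hφ0 hφC hφi 0).trans (pow_one _))

theorem integrableOn_iterConv (hφm : Measurable φ) (hφ0 : ∀ t, 0 ≤ t → 0 ≤ φ t)
    (hφC : ∀ t, 0 ≤ t → φ t ≤ C) (hφi : IntegrableOn φ (Ioi 0)) (k : ℕ) :
    IntegrableOn (iterConv φ k) (Ioi 0) := by
  refine ⟨(measurable_iterConv hφm k).aestronglyMeasurable, ?_⟩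
  rw [hasFiniteIntegral_iff_ofReal (ae_restrict_Ioi_iterConv_nonneg hφ0 k),
    lintegral_ofReal_iterConv hφm hφ0 hφC hφi k]
  exact pow_lt_top ofReal_lt_top

theorem integral_iterConv (hφm : Measurable φ) (hφ0 : ∀ t, 0 ≤ t → 0 ≤ φ t)
    (hφC : ∀ t, 0 ≤ t → φ t ≤ C) (hφi : IntegrableOn φ (Ioi 0)) (k : ℕ) :
    ∫ t in Ioi 0, iterConv φ k t = (∫ s in Ioi 0, φ s) ^ (k + 1) := by
  rw [integral_eq_lintegral_of_nonneg_ae (ae_restrict_Ioi_iterConv_nonneg hφ0 k)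
    (measurable_iterConv hφm k).aestronglyMeasurable, lintegral_ofReal_iterConv hφm hφ0 hφC hφi k,
    toReal_pow, toReal_ofReal (setIntegral_Ioi_zero_nonneg hφ0)]

end IterConv

-- `iterConvSeries φ c = Σ_{k ≥ 1} c^k φ^{*k}`; the paper's `ψ_T` is `iterConvSeries φ (a_T λ)`.
noncomputable def iterConvSeries (φ : ℝ → ℝ) (c t : ℝ) : ℝ :=
  ∑' k : ℕ, c ^ (k + 1) * iterConv φ k t

section IterConvSeries

variable {φ : ℝ → ℝ} {C c t : ℝ}

theorem iterConvSeries_nonneg (hφ0 : ∀ t, 0 ≤ t → 0 ≤ φ t) (hc : 0 ≤ c) (ht : 0 ≤ t) :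
    0 ≤ iterConvSeries φ c t :=
  tsum_nonneg fun k => mul_nonneg (pow_nonneg hc _) (iterConv_nonneg hφ0 k t ht)

theorem iterConvSeries_le (hφ0 : ∀ t, 0 ≤ t → 0 ≤ φ t) (hφC : ∀ t, 0 ≤ t → φ t ≤ C)
    (hφi : IntegrableOn φ (Ioi 0)) (hc : 0 ≤ c) (hcB : c * ∫ s in Ioi 0, φ s < 1) (ht : 0 ≤ t) :
    iterConvSeries φ c t ≤ c * C / (1 - c * ∫ s in Ioi 0, φ s) := by
  set B := ∫ s in Ioi 0, φ s
  have hcB0 : 0 ≤ c * B :=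
    mul_nonneg hc (setIntegral_Ioi_zero_nonneg hφ0)
  have hterm : ∀ k, c ^ (k + 1) * iterConv φ k t ≤ c * C * (c * B) ^ k := fun k =>
    calc c ^ (k + 1) * iterConv φ k t ≤ c ^ (k + 1) * (C * B ^ k) :=
          mul_le_mul_of_nonneg_left (iterConv_le hφ0 hφC hφi k t ht) (pow_nonneg hc _)
      _ = c * C * (c * B) ^ k := by ring
  have hgeom : Summable fun k : ℕ => c * C * (c * B) ^ k :=
    (summable_geometric_of_lt_one hcB0 hcB).mul_left _
  calc iterConvSeries φ c t ≤ ∑' k : ℕ, c * C * (c * B) ^ k :=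
        (hgeom.of_nonneg_of_le (fun k => mul_nonneg (pow_nonneg hc _)
          (iterConv_nonneg hφ0 k t ht)) hterm).tsum_le_tsum hterm hgeom
    _ = c * C / (1 - c * B) := by
        rw [tsum_mul_left, tsum_geometric_of_lt_one hcB0 hcB, div_eq_mul_inv]

theorem integral_pow_mul_iterConv (hφm : Measurable φ) (hφ0 : ∀ t, 0 ≤ t → 0 ≤ φ t)
    (hφC : ∀ t, 0 ≤ t → φ t ≤ C) (hφi : IntegrableOn φ (Ioi 0)) (k : ℕ) :
    ∫ t in Ioi 0, c ^ (k + 1) * iterConv φ k t = (c * ∫ s in Ioi 0, φ s) ^ (k + 1) := by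
  rw [integral_const_mul, integral_iterConv hφm hφ0 hφC hφi, mul_pow]

theorem summable_integral_norm_pow_mul_iterConv (hφm : Measurable φ)
    (hφ0 : ∀ t, 0 ≤ t → 0 ≤ φ t) (hφC : ∀ t, 0 ≤ t → φ t ≤ C) (hφi : IntegrableOn φ (Ioi 0))
    (hc : 0 ≤ c) (hcB : c * ∫ s in Ioi 0, φ s < 1) :
    Summable fun k : ℕ => ∫ t in Ioi 0, ‖c ^ (k + 1) * iterConv φ k t‖ := by
  have hnorm : ∀ k : ℕ, ∫ t in Ioi 0, ‖c ^ (k + 1) * iterConv φ k t‖ =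
      (c * ∫ s in Ioi 0, φ s) ^ (k + 1) := fun k => by
    rw [← integral_pow_mul_iterConv hφm hφ0 hφC hφi]
    exact integral_congr_ae ((ae_restrict_Ioi_iterConv_nonneg hφ0 k).mono fun t ht =>
      Real.norm_of_nonneg (mul_nonneg (pow_nonneg hc _) ht))
  simp_rw [hnorm]
  exact (summable_nat_add_iff 1).2 (summable_geometric_of_lt_one
    (mul_nonneg hc (setIntegral_Ioi_zero_nonneg hφ0)) hcB)

theorem integrableOn_iterConvSeries (hφm : Measurable φ) (hφ0 : ∀ t, 0 ≤ t → 0 ≤ φ t)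
    (hφC : ∀ t, 0 ≤ t → φ t ≤ C) (hφi : IntegrableOn φ (Ioi 0)) (hc : 0 ≤ c)
    (hcB : c * ∫ s in Ioi 0, φ s < 1) :
    IntegrableOn (iterConvSeries φ c) (Ioi 0) :=
  integrable_tsum_of_summable_integral_norm
    (fun k => (integrableOn_iterConv hφm hφ0 hφC hφi k).const_mul _)
    (summable_integral_norm_pow_mul_iterConv hφm hφ0 hφC hφi hc hcB)

theorem integral_iterConvSeries (hφm : Measurable φ) (hφ0 : ∀ t, 0 ≤ t → 0 ≤ φ t)
    (hφC : ∀ t, 0 ≤ t → φ t ≤ C) (hφi : IntegrableOn φ (Ioi 0)) (hc : 0 ≤ c)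
    (hcB : c * ∫ s in Ioi 0, φ s < 1) :
    ∫ t in Ioi 0, iterConvSeries φ c t =
      c * (∫ s in Ioi 0, φ s) / (1 - c * ∫ s in Ioi 0, φ s) := by
  have hsum : HasSum (fun k : ℕ => (c * ∫ s in Ioi 0, φ s) ^ (k + 1))
      (∫ t in Ioi 0, iterConvSeries φ c t) := by
    simpa only [iterConvSeries, integral_pow_mul_iterConv hφm hφ0 hφC hφi] using
      hasSum_integral_of_summable_integral_norm
        (fun k => (integrableOn_iterConv hφm hφ0 hφC hφi k).const_mul (c ^ (k + 1)))
        (summable_integral_norm_pow_mul_iterConv hφm hφ0 hφC hφi hc hcB)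
  simp_rw [pow_succ'] at hsum
  rw [div_eq_mul_inv]
  exact hsum.unique ((hasSum_geometric_of_lt_one (mul_nonneg hc
    (setIntegral_Ioi_zero_nonneg hφ0)) hcB).mul_left _)

theorem integrableOn_sq_iterConvSeries (hφm : Measurable φ) (hφ0 : ∀ t, 0 ≤ t → 0 ≤ φ t)
    (hφC : ∀ t, 0 ≤ t → φ t ≤ C) (hφi : IntegrableOn φ (Ioi 0)) (hc : 0 ≤ c)
    (hcB : c * ∫ s in Ioi 0, φ s < 1) :
    IntegrableOn (fun t => iterConvSeries φ c t ^ 2) (Ioi 0) :=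
  (integrableOn_iterConvSeries hφm hφ0 hφC hφi hc hcB).sq_of_ae_abs_le
    (ae_restrict_of_forall_mem measurableSet_Ioi fun _ ht =>
      (abs_of_nonneg (iterConvSeries_nonneg hφ0 hc (le_of_lt ht))).le.trans
        (iterConvSeries_le hφ0 hφC hφi hc hcB (le_of_lt ht)))

theorem integral_sq_iterConvSeries_le (hφm : Measurable φ) (hφ0 : ∀ t, 0 ≤ t → 0 ≤ φ t)
    (hφC : ∀ t, 0 ≤ t → φ t ≤ C) (hφi : IntegrableOn φ (Ioi 0)) (hc : 0 ≤ c)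
    (hcB : c * ∫ s in Ioi 0, φ s < 1) :
    ∫ t in Ioi 0, iterConvSeries φ c t ^ 2 ≤
      c * C / (1 - c * ∫ s in Ioi 0, φ s) *
        (c * (∫ s in Ioi 0, φ s) / (1 - c * ∫ s in Ioi 0, φ s)) := by
  rw [← integral_iterConvSeries hφm hφ0 hφC hφi hc hcB]
  exact integral_sq_le_mul_integral (integrableOn_iterConvSeries hφm hφ0 hφC hφi hc hcB)
    (ae_restrict_of_forall_mem measurableSet_Ioi fun t ht =>
      iterConvSeries_nonneg hφ0 hc (le_of_lt ht))
    (ae_restrict_of_forall_mem measurableSet_Ioi fun t ht =>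
      iterConvSeries_le hφ0 hφC hφi hc hcB (le_of_lt ht))

end IterConvSeries

theorem tendsto_setIntegral_Ioi_comp_mul_of_le {g : ℕ → ℝ → ℝ} {K : ℝ}
    (hg : ∀ T t, 0 ≤ g T t) (hK : ∀ T, ∫ t in Ioi 0, g T t ≤ K) :
    Tendsto (fun T : ℕ => ∫ s in Ioi 0, g T (T * s)) atTop (nhds 0) := by
  refine tendsto_of_tendsto_of_tendsto_of_le_of_le' tendsto_const_nhds
    (tendsto_const_div_atTop_nhds_zero_nat K)
    (Eventually.of_forall fun T => setIntegral_nonneg measurableSet_Ioi fun s _ => hg T _) ?_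
  filter_upwards [eventually_gt_atTop 0] with T hT
  have hT' : (0 : ℝ) < T := Nat.cast_pos.2 hT
  rw [integral_comp_mul_left_Ioi (g T) 0 hT', mul_zero, smul_eq_mul, div_eq_inv_mul]
  exact mul_le_mul_of_nonneg_left (hK T) (inv_nonneg.2 hT'.le)

theorem psi_T_L2_bounds_and_scaling_limit_general
    (φ : ℝ → ℝ) (lam : ℝ) (a : ℕ → ℝ) (ψ : ℕ → ℝ → ℝ)
    (hφ_meas : Measurable φ)
    (hφ_nonneg : ∀ t : ℝ, 0 ≤ t → 0 ≤ φ t)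
    (hφ_bdd : ∃ C : ℝ, ∀ t : ℝ, 0 ≤ t → φ t ≤ C)
    (hφ_int : IntegrableOn φ (Set.Ioi 0))
    (hlam_pos : 0 < lam)
    (hlam : lam * ∫ t in Set.Ioi (0 : ℝ), φ t < 1)
    (ha : ∀ T : ℕ, a T ∈ Set.Ioo (0 : ℝ) 1)
    (hψ : ∀ (T : ℕ) (t : ℝ), ψ T t = ∑' k : ℕ, (a T * lam) ^ (k + 1) * iterConv φ k t) :
    (∀ T : ℕ, IntegrableOn (fun t => (ψ T t) ^ 2) (Set.Ioi 0)) ∧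
    (∃ C : ℝ, ∀ T : ℕ, (∫ t in Set.Ioi (0 : ℝ), (ψ T t) ^ 2) ≤ C) ∧
    Tendsto (fun T : ℕ => ∫ s in Set.Ioi (0 : ℝ), (ψ T ((T : ℝ) * s)) ^ 2)
      atTop (nhds 0) := by
  obtain ⟨C, hφC⟩ := hφ_bdd
  set B := ∫ t in Ioi (0 : ℝ), φ t
  have hB : 0 ≤ B := setIntegral_Ioi_zero_nonneg hφ_nonneg
  have hC : 0 ≤ C := (hφ_nonneg 0 le_rfl).trans (hφC 0 le_rfl)
  have hψc : ∀ T, ψ T = iterConvSeries φ (a T * lam) := fun T => funext (hψ T)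
  have hc : ∀ T, 0 ≤ a T * lam := fun T => mul_nonneg (ha T).1.le hlam_pos.le
  have hc_le : ∀ T, a T * lam ≤ lam := fun T => mul_le_of_le_one_left hlam_pos.le (ha T).2.le
  have hcB : ∀ T, a T * lam * B < 1 := fun T =>
    (mul_le_mul_of_nonneg_right (hc_le T) hB).trans_lt hlam
  have hbound : ∀ T, ∫ t in Ioi 0, ψ T t ^ 2 ≤
      lam * C / (1 - lam * B) * (lam * B / (1 - lam * B)) := fun T => by
    rw [hψc T]
    refine (integral_sq_iterConvSeries_le hφ_meas hφ_nonneg hφC hφ_int (hc T) (hcB T)).trans ?_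
    have hcT := hc_le T
    gcongr
    exact div_nonneg (mul_nonneg (hc T) hB) (sub_nonneg.2 (hcB T).le)
  refine ⟨fun T => ?_, ⟨_, hbound⟩,
    tendsto_setIntegral_Ioi_comp_mul_of_le (fun T t => sq_nonneg _) hbound⟩
  rw [hψc T]
  exact integrableOn_sq_iterConvSeries hφ_meas hφ_nonneg hφC hφ_int (hc T) (hcB T)

/-- For `φ ∈ L¹ ∩ L²(0,∞)` nonnegative bounded, `λ > 0` with `λ‖φ‖₁ < 1`, and a
sequence `a_T ∈ (0,1)`, the functions `ψ_T = Σ_{k≥1} (a_T λ)^k φ^{*k}` lie in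
`L²(0,∞)` with uniformly bounded `L²` norms, and `∫₀^∞ ψ_T(Ts)² ds → 0`
as `T → ∞`. -/
theorem psi_T_L2_bounds_and_scaling_limit
    (φ : ℝ → ℝ) (lam : ℝ) (a : ℕ → ℝ) (ψ : ℕ → ℝ → ℝ)
    (hφ_meas : Measurable φ)
    (hφ_nonneg : ∀ t : ℝ, 0 ≤ t → 0 ≤ φ t)
    (hφ_bdd : ∃ C : ℝ, ∀ t : ℝ, 0 ≤ t → φ t ≤ C)
    (hφ_int : IntegrableOn φ (Set.Ioi 0))
    (hφ_L2 : IntegrableOn (fun t => (φ t) ^ 2) (Set.Ioi 0))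
    (hlam_pos : 0 < lam)
    (hlam : lam * ∫ t in Set.Ioi (0 : ℝ), φ t < 1)
    (ha : ∀ T : ℕ, a T ∈ Set.Ioo (0 : ℝ) 1)
    (hψ : ∀ (T : ℕ) (t : ℝ), ψ T t = ∑' k : ℕ, (a T * lam) ^ (k + 1) * iterConv φ k t) :
    (∀ T : ℕ, IntegrableOn (fun t => (ψ T t) ^ 2) (Set.Ioi 0)) ∧
    (∃ C : ℝ, ∀ T : ℕ, (∫ t in Set.Ioi (0 : ℝ), (ψ T t) ^ 2) ≤ C) ∧
    Tendsto (fun T : ℕ => ∫ s in Set.Ioi (0 : ℝ), (ψ T ((T : ℝ) * s)) ^ 2)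
      atTop (nhds 0) :=
  psi_T_L2_bounds_and_scaling_limit_general φ lam a ψ hφ_meas hφ_nonneg hφ_bdd hφ_int hlam_pos hlam
    ha hψ
end
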